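/- arXiv:2007.02141 — 7 statements merged into one kernel-verified Lean document; each statement's English description precedes it below -/
import Mathlib

section
/- Fix a target profile (π₁ᵉ,π₂ᵉ) ∈ Π₁ × Π₂ and for a function w : Π₁ × Π₂ → ℝ define the exploitability at the target profile e_w = max_{π₁∈Π₁} w(π₁,π₂ᵉ) + max_{π₂∈Π₂} (−w(π₁ᵉ,π₂)). Then |e_v − e_v̂| ≤ 3 · max_{α,β ∈ Π₁×Π₂} |Δ(α,β) − Δ̂(α,β)|. -/
private lemma sup_sub_sup_le {ι : Type*} [Fintype ι] [Nonempty ι] (g h : ι → ℝ) (ε : ℝ)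
    (H : ∀ i, g i - h i ≤ ε) : (⨆ i, g i) - ⨆ i, h i ≤ ε := by
  rw [sub_le_iff_le_add]
  refine ciSup_le fun i => ?_
  have h1 : h i ≤ ⨆ i, h i := le_ciSup (Set.Finite.bddAbove (Set.finite_range _)) i
  have := H i
  linarith

/-- For finite nonempty policy classes `P₁`, `P₂`, true and estimated player-1 values
`v`, `vhat : P₁ × P₂ → ℝ`, and a fixed target profile `(π₁e, π₂e)`, the difference
between the true and estimated exploitability at the target profile is at most three
times the maximal deviation of the estimated value-difference function
`Δ̂(α,β) = v̂(α) − v̂(β)` from the true one `Δ(α,β) = v(α) − v(β)`. -/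
theorem exploitability_estimation_error_bound {P₁ P₂ : Type*}
    [Fintype P₁] [Fintype P₂] [Nonempty P₁] [Nonempty P₂]
    (v vhat : P₁ × P₂ → ℝ) (π₁e : P₁) (π₂e : P₂) :
    |(((⨆ π₁ : P₁, v (π₁, π₂e)) + ⨆ π₂ : P₂, -v (π₁e, π₂)) -
        ((⨆ π₁ : P₁, vhat (π₁, π₂e)) + ⨆ π₂ : P₂, -vhat (π₁e, π₂)))| ≤
      3 * ⨆ p : (P₁ × P₂) × (P₁ × P₂), |(v p.1 - v p.2) - (vhat p.1 - vhat p.2)| := by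
  set D := ⨆ p : (P₁ × P₂) × (P₁ × P₂), |(v p.1 - v p.2) - (vhat p.1 - vhat p.2)| with hD
  have hbdd : BddAbove (Set.range fun p : (P₁ × P₂) × (P₁ × P₂) =>
      |(v p.1 - v p.2) - (vhat p.1 - vhat p.2)|) :=
    Set.Finite.bddAbove (Set.finite_range _)
  have key : ∀ a b : P₁ × P₂, |(v a - v b) - (vhat a - vhat b)| ≤ D :=
    fun a b => le_ciSup hbdd (a, b)
  set e : P₁ × P₂ := (π₁e, π₂e)
  set c : ℝ := v e - vhat e with hc
  have hD0 : 0 ≤ D := by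
    have := key e e
    simp at this
    linarith [this]
  have h1 : (⨆ π₁ : P₁, v (π₁, π₂e)) - (⨆ π₁ : P₁, vhat (π₁, π₂e)) ≤ c + D := by
    refine sup_sub_sup_le _ _ _ fun π₁ => ?_
    have := abs_le.mp (key (π₁, π₂e) e)
    linarith [this.2]
  have h2 : (⨆ π₂ : P₂, -v (π₁e, π₂)) - (⨆ π₂ : P₂, -vhat (π₁e, π₂)) ≤ -c + D := by
    refine sup_sub_sup_le _ _ _ fun π₂ => ?_
    have := abs_le.mp (key e (π₁e, π₂))
    linarith [this.2]
  have h3 : (⨆ π₁ : P₁, vhat (π₁, π₂e)) - (⨆ π₁ : P₁, v (π₁, π₂e)) ≤ -c + D := by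
    refine sup_sub_sup_le _ _ _ fun π₁ => ?_
    have := abs_le.mp (key (π₁, π₂e) e)
    linarith [this.1]
  have h4 : (⨆ π₂ : P₂, -vhat (π₁e, π₂)) - (⨆ π₂ : P₂, -v (π₁e, π₂)) ≤ c + D := by
    refine sup_sub_sup_le _ _ _ fun π₂ => ?_
    have := abs_le.mp (key e (π₁e, π₂))
    linarith [this.1]
  rw [abs_le]
  constructor <;> linarith
end

section
/- Define the exploitability e(π₁,π₂) = max_{a∈Π₁} v(a,π₂) + max_{b∈Π₂} (−v(π₁,b)). Suppose (π₁*,π₂*) minimizes e over Π₁ × Π₂, π̂₁ maximizes π₁ ↦ min_{π₂∈Π₂} v̂(π₁,π₂) over Π₁, and π̂₂ minimizes π₂ ↦ max_{π₁∈Π₁} v̂(π₁,π₂) over Π₂. Then e(π̂₁,π̂₂) − e(π₁*,π₂*) ≤ 4 · max_{α,β ∈ Π₁×Π₂} |Δ(α,β) − Δ̂(α,β)|. -/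
private lemma my_ciSup_neg {ι : Type*} [Fintype ι] [Nonempty ι] (f : ι → ℝ) :
    (⨆ i, -f i) = -⨅ i, f i := by
  apply le_antisymm
  · exact ciSup_le fun i => neg_le_neg (ciInf_le (Set.finite_range f).bddBelow i)
  · rw [neg_le]
    exact le_ciInf fun i => by
      have := le_ciSup (Set.finite_range fun i => -f i).bddAbove i
      linarith


/-- Exploitability bound for the selected best evaluation policy profile.
With `e(π₁,π₂) = max_a v(a,π₂) + max_b (−v(π₁,b))` the true exploitability,
if `(π₁s,π₂s)` minimizes `e` over `P₁ × P₂`, `πhat₁` maximizes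
`π₁ ↦ min_{π₂} v̂(π₁,π₂)`, and `πhat₂` minimizes `π₂ ↦ max_{π₁} v̂(π₁,π₂)`, then
`e(πhat₁,πhat₂) − e(π₁s,π₂s) ≤ 4 · max_{α,β} |Δ(α,β) − Δ̂(α,β)|`. -/
theorem selected_profile_exploitability_bound {P₁ P₂ : Type*}
    [Fintype P₁] [Fintype P₂] [Nonempty P₁] [Nonempty P₂]
    (v vhat : P₁ × P₂ → ℝ)
    (e : P₁ → P₂ → ℝ)
    (he : ∀ (π₁ : P₁) (π₂ : P₂),
      e π₁ π₂ = (⨆ a : P₁, v (a, π₂)) + ⨆ b : P₂, -v (π₁, b))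
    (π₁s : P₁) (π₂s : P₂)
    (hmin : ∀ (π₁ : P₁) (π₂ : P₂), e π₁s π₂s ≤ e π₁ π₂)
    (πhat₁ : P₁)
    (hπhat₁ : ∀ π₁ : P₁, (⨅ π₂ : P₂, vhat (π₁, π₂)) ≤ ⨅ π₂ : P₂, vhat (πhat₁, π₂))
    (πhat₂ : P₂)
    (hπhat₂ : ∀ π₂ : P₂, (⨆ π₁ : P₁, vhat (π₁, πhat₂)) ≤ ⨆ π₁ : P₁, vhat (π₁, π₂)) :
    e πhat₁ πhat₂ - e π₁s π₂s ≤
      4 * ⨆ p : (P₁ × P₂) × (P₁ × P₂), |(v p.1 - v p.2) - (vhat p.1 - vhat p.2)| := by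
  set ε := ⨆ p : (P₁ × P₂) × (P₁ × P₂), |(v p.1 - v p.2) - (vhat p.1 - vhat p.2)| with hεdef
  have hε : ∀ α β : P₁ × P₂, |(v α - v β) - (vhat α - vhat β)| ≤ ε := fun α β =>
    le_ciSup (f := fun p : (P₁ × P₂) × (P₁ × P₂) => |(v p.1 - v p.2) - (vhat p.1 - vhat p.2)|) (Set.finite_range _).bddAbove (α, β)
  set c := v (π₁s, π₂s) - vhat (π₁s, π₂s) with hc
  have hub : ∀ p : P₁ × P₂, v p ≤ vhat p + c + ε ∧ vhat p + c - ε ≤ v p := by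
    intro p
    have := abs_le.mp (hε p (π₁s, π₂s))
    constructor <;> [linarith [this.2]; linarith [this.1]]
  have hbdd₁ : ∀ π₂ : P₂, BddAbove (Set.range fun a : P₁ => v (a, π₂)) :=
    fun _ => (Set.finite_range _).bddAbove
  have hbdd₁' : ∀ π₂ : P₂, BddAbove (Set.range fun a : P₁ => vhat (a, π₂)) :=
    fun _ => (Set.finite_range _).bddAbove
  -- Step 1: M(π̂₂) ≤ M̂(π̂₂) + c + ε
  have h1 : (⨆ a : P₁, v (a, πhat₂)) ≤ (⨆ a : P₁, vhat (a, πhat₂)) + c + ε :=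
    ciSup_le fun a => by
      have h := (hub (a, πhat₂)).1
      have h2 := le_ciSup (hbdd₁' πhat₂) a
      linarith
  -- Step 2: S(π̂₁) ≤ -(inf vhat(π̂₁,·)) - c + ε
  have h2 : (⨆ b : P₂, -v (πhat₁, b)) ≤ -(⨅ b : P₂, vhat (πhat₁, b)) - c + ε :=
    ciSup_le fun b => by
      have h := (hub (πhat₁, b)).2
      have h2 := ciInf_le (Set.finite_range fun b : P₂ => vhat (πhat₁, b)).bddBelow b
      linarith
  -- Step 3: selection properties
  have h3 : (⨆ a : P₁, vhat (a, πhat₂)) ≤ ⨆ a : P₁, vhat (a, π₂s) := hπhat₂ π₂s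
  have h4 : -(⨅ b : P₂, vhat (πhat₁, b)) ≤ -(⨅ b : P₂, vhat (π₁s, b)) :=
    neg_le_neg (hπhat₁ π₁s)
  -- Step 4: back to v at (π₁s, π₂s)
  have h5 : (⨆ a : P₁, vhat (a, π₂s)) ≤ (⨆ a : P₁, v (a, π₂s)) - c + ε :=
    ciSup_le fun a => by
      have h := (hub (a, π₂s)).2
      have h2 := le_ciSup (hbdd₁ π₂s) a
      linarith
  have h6 : -(⨅ b : P₂, vhat (π₁s, b)) ≤ (⨆ b : P₂, -v (π₁s, b)) + c + ε := by
    rw [← my_ciSup_neg]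
    exact ciSup_le fun b => by
      have h := (hub (π₁s, b)).1
      have h2 := le_ciSup (Set.finite_range fun b : P₂ => -v (π₁s, b)).bddAbove b
      linarith
  rw [he πhat₁ πhat₂, he π₁s π₂s]
  linarith
end

section
/- Let T be a natural number, γ a real number, and let ρ̂, ρ, r, Q̂, Q, V̂, V : ℕ → ℝ satisfy ρ̂(0) = ρ(0) = 1 and V̂(T+1) = V(T+1) = 0. Then Σ_{t=1}^{T} γ^{t−1}(ρ̂(t)(r(t) − Q̂(t)) + ρ̂(t−1)V̂(t)) − Σ_{t=1}^{T} γ^{t−1}(ρ(t)(r(t) − Q(t)) + ρ(t−1)V(t)) = Σ_{t=1}^{T} γ^{t−1}(ρ(t)(Q(t) − Q̂(t)) + ρ(t−1)(V̂(t) − V(t))) + Σ_{t=1}^{T} γ^{t−1}(ρ̂(t) − ρ(t))(r(t) − Q(t) + γ·V(t+1)) + Σ_{t=1}^{T} γ^{t−1}(ρ̂(t) − ρ(t))(Q(t) − Q̂(t)) + Σ_{t=1}^{T} γ^{t−1}(ρ̂(t−1) − ρ(t−1))(V̂(t) − V(t)). -/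
/-- Exact four-term error decomposition (the terms `S₁, S₂, S₃, S₄`) of the difference
between the doubly robust value estimator built from estimated quantities
`(ρh, Qh, Vh)` and the oracle estimator built from the true quantities `(ρ, Q, V)`,
along a single trajectory of horizon `T` with rewards `r` and discount `γ`,
given `ρh 0 = ρ 0 = 1` and `Vh (T+1) = V (T+1) = 0`. -/
theorem dr_estimator_error_decomposition (T : ℕ) (γ : ℝ) (ρh ρ r Qh Q Vh V : ℕ → ℝ)
    (hρh : ρh 0 = 1) (hρ : ρ 0 = 1) (hVh : Vh (T + 1) = 0) (hV : V (T + 1) = 0) :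
    (∑ t ∈ Finset.Icc 1 T, γ ^ (t - 1) * (ρh t * (r t - Qh t) + ρh (t - 1) * Vh t)) -
        (∑ t ∈ Finset.Icc 1 T, γ ^ (t - 1) * (ρ t * (r t - Q t) + ρ (t - 1) * V t)) =
      (∑ t ∈ Finset.Icc 1 T,
          γ ^ (t - 1) * (ρ t * (Q t - Qh t) + ρ (t - 1) * (Vh t - V t))) +
        (∑ t ∈ Finset.Icc 1 T,
          γ ^ (t - 1) * (ρh t - ρ t) * (r t - Q t + γ * V (t + 1))) +
        (∑ t ∈ Finset.Icc 1 T, γ ^ (t - 1) * (ρh t - ρ t) * (Q t - Qh t)) +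
        (∑ t ∈ Finset.Icc 1 T,
          γ ^ (t - 1) * (ρh (t - 1) - ρ (t - 1)) * (Vh t - V t)) := by
  set g : ℕ → ℝ := fun t => γ ^ t * (ρh t - ρ t) * V (t + 1) with hg
  have tel : ∑ i ∈ Finset.range T, (g i - g (i + 1)) = g 0 - g T :=
    Finset.sum_range_sub' g T
  have hg0 : g 0 = 0 := by simp [hg, hρh, hρ]
  have hgT : g T = 0 := by simp [hg, hV]
  have conv : ∀ (f : ℕ → ℝ), ∑ t ∈ Finset.Icc 1 T, f t =
      ∑ i ∈ Finset.range T, f (i + 1) := by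
    intro f
    rw [← Finset.Ico_add_one_right_eq_Icc, Finset.sum_Ico_eq_sum_range]
    simp [add_comm]
  rw [conv, conv, conv, conv, conv, conv]
  rw [sub_eq_iff_eq_add]
  rw [← Finset.sum_add_distrib, ← Finset.sum_add_distrib, ← Finset.sum_add_distrib,
    ← Finset.sum_add_distrib]
  have : ∀ i ∈ Finset.range T,
      γ ^ (i + 1 - 1) * (ρh (i + 1) * (r (i + 1) - Qh (i + 1)) + ρh (i + 1 - 1) * Vh (i + 1))
      = (g i - g (i + 1)) +
        (γ ^ (i + 1 - 1) * (ρ (i + 1) * (Q (i + 1) - Qh (i + 1)) +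
            ρ (i + 1 - 1) * (Vh (i + 1) - V (i + 1))) +
          γ ^ (i + 1 - 1) * (ρh (i + 1) - ρ (i + 1)) *
            (r (i + 1) - Q (i + 1) + γ * V (i + 1 + 1)) +
          γ ^ (i + 1 - 1) * (ρh (i + 1) - ρ (i + 1)) * (Q (i + 1) - Qh (i + 1)) +
          γ ^ (i + 1 - 1) * (ρh (i + 1 - 1) - ρ (i + 1 - 1)) * (Vh (i + 1) - V (i + 1)) +
          γ ^ (i + 1 - 1) * (ρ (i + 1) * (r (i + 1) - Q (i + 1)) + ρ (i + 1 - 1) * V (i + 1))) := by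
    intro i _
    simp only [hg, Nat.add_sub_cancel, pow_succ]
    ring
  rw [Finset.sum_congr rfl this, Finset.sum_add_distrib, tel, hg0, hgT]
  ring
end

section
/- For any n, any weights Γ, and any π₁, π₂, π₃ ∈ Π, the sum of inner product distance satisfies the triangle inequality: I_Γ(π₁,π₂) ≤ I_Γ(π₁,π₃) + I_Γ(π₃,π₂). -/
/-- The sum of inner product distance
`I_Γ(a,b) = √( Σ_i M(a,b,i)² / max_{(α,β)} Σ_i M(α,β,i)² )` (with `0/0 = 0`), where
`M(a,b,i) = Σ_{s} ⟨a(s) − b(s), Γ(i,s)⟩`, satisfies the triangle inequality over a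
finite nonempty class `P` of policies (given via the map `ι` into functions
`S → (Fin d → ℝ)`). -/
theorem sum_inner_product_distance_triangle {S : Type*} [Fintype S] {d n : ℕ}
    (Γ : Fin n → S → Fin d → ℝ)
    {P : Type*} [Fintype P] [Nonempty P] (ι : P → S → Fin d → ℝ)
    (M : P → P → Fin n → ℝ)
    (hM : ∀ (a b : P) (i : Fin n),
      M a b i = ∑ s : S, ∑ j : Fin d, (ι a s j - ι b s j) * Γ i s j)
    (I : P → P → ℝ)
    (hI : ∀ a b : P,
      I a b = Real.sqrt ((∑ i : Fin n, M a b i ^ 2) /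
        ⨆ p : P × P, ∑ i : Fin n, M p.1 p.2 i ^ 2))
    (π₁ π₂ π₃ : P) :
    I π₁ π₂ ≤ I π₁ π₃ + I π₃ π₂ := by
  set f : P → EuclideanSpace ℝ (Fin n) :=
    fun a => WithLp.toLp 2 (fun i => ∑ s : S, ∑ j : Fin d, ι a s j * Γ i s j) with hf
  have hMf : ∀ a b : P, ∀ i : Fin n, M a b i = f a i - f b i := by
    intro a b i
    simp only [hM, hf, PiLp.toLp_apply, ← Finset.sum_sub_distrib, sub_mul]
  have hsum : ∀ a b : P, (∑ i : Fin n, M a b i ^ 2) = ‖f a - f b‖ ^ 2 := by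
    intro a b
    rw [EuclideanSpace.norm_eq, Real.sq_sqrt (by positivity)]
    refine Finset.sum_congr rfl fun i _ => ?_
    rw [hMf a b i]
    simp [sq_abs]
  set C : ℝ := ⨆ p : P × P, ∑ i : Fin n, M p.1 p.2 i ^ 2 with hC
  have hIeq : ∀ a b : P, I a b = ‖f a - f b‖ / Real.sqrt C := by
    intro a b
    rw [hI, hsum, Real.sqrt_div (by positivity), Real.sqrt_sq (norm_nonneg _)]
  rw [hIeq, hIeq, hIeq, ← add_div]
  rcases eq_or_lt_of_le (Real.sqrt_nonneg C) with h | h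
  · simp [← h]
  · gcongr
    calc ‖f π₁ - f π₂‖ = ‖(f π₁ - f π₃) + (f π₃ - f π₂)‖ := by rw [sub_add_sub_cancel]
      _ ≤ ‖f π₁ - f π₃‖ + ‖f π₃ - f π₂‖ := norm_add_le _ _
end

section
/- The importance sampling estimator is unbiased: the expectation under the behavior profile of the importance-weighted discounted reward equals the target profile's value, i.e. Σ_τ p_{πᵇ}(τ) · Σ_{t=1}^T γ^{t−1} ρ_t(τ) R(s_t,a_t¹,a_t²) = v₁(π₁,π₂). -/
open Finset

noncomputable section
namespace TZMG

variable {S A₁ A₂ : Type*}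

/-- Probability of a trajectory `τ = (s₁,a₁¹,a₁²,…,s_T,a_T¹,a_T²)` (0-indexed:
step `t` of the paper is index `t-1`) under the profile `(σ₁, σ₂)`:
`P_I(s₁) · ∏_{t=1}^T σ₁(a_t¹|s_t)σ₂(a_t²|s_t) · ∏_{t=1}^{T−1} P_T(s_{t+1}|s_t,a_t¹,a_t²)`. -/
def trajProb {T : ℕ} [NeZero T] (PI : S → ℝ) (PT : S → A₁ → A₂ → S → ℝ)
    (σ₁ : ℕ → S → A₁ → ℝ) (σ₂ : ℕ → S → A₂ → ℝ)
    (τ : Fin T → S × A₁ × A₂) : ℝ :=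
  PI (τ 0).1 *
    (∏ k : Fin T, σ₁ k (τ k).1 (τ k).2.1 * σ₂ k (τ k).1 (τ k).2.2) *
    ∏ k : Fin T,
      if h : (k : ℕ) + 1 < T then PT (τ k).1 (τ k).2.1 (τ k).2.2 (τ ⟨k + 1, h⟩).1
      else 1

/-- The marginal state-action distribution `p^σ` of the profile `(σ₁, σ₂)`, 0-indexed:
`marg PI PT σ₁ σ₂ k` is the paper's `p^σ_{k+1}`, defined recursively by
`p^σ_1(s,a,b) = σ₁(a|s)σ₂(b|s)P_I(s)` and
`p^σ_{t}(s,a,b) = σ₁(a|s)σ₂(b|s)·Σ_{s',a',b'} P_T(s|s',a',b') p^σ_{t−1}(s',a',b')`. -/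
def marg [Fintype S] [Fintype A₁] [Fintype A₂]
    (PI : S → ℝ) (PT : S → A₁ → A₂ → S → ℝ)
    (σ₁ : ℕ → S → A₁ → ℝ) (σ₂ : ℕ → S → A₂ → ℝ) : ℕ → S → A₁ → A₂ → ℝ
  | 0, s, a, b => σ₁ 0 s a * σ₂ 0 s b * PI s
  | (k + 1), s, a, b => σ₁ (k + 1) s a * σ₂ (k + 1) s b *
      ∑ s' : S, ∑ a' : A₁, ∑ b' : A₂, PT s' a' b' s * marg PI PT σ₁ σ₂ k s' a' b'

/-- The `T`-step discounted value of the profile `(σ₁, σ₂)`: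
`v₁(σ₁,σ₂) = Σ_τ p_σ(τ) Σ_{t=1}^T γ^{t−1} R(s_t,a_t¹,a_t²)`. -/
def value [Fintype S] [Fintype A₁] [Fintype A₂] (T : ℕ) [NeZero T]
    (PI : S → ℝ) (PT : S → A₁ → A₂ → S → ℝ) (R : S → A₁ → A₂ → ℝ) (γ : ℝ)
    (σ₁ : ℕ → S → A₁ → ℝ) (σ₂ : ℕ → S → A₂ → ℝ) : ℝ :=
  ∑ τ : Fin T → S × A₁ × A₂, trajProb PI PT σ₁ σ₂ τ *
    ∑ k : Fin T, γ ^ (k : ℕ) * R (τ k).1 (τ k).2.1 (τ k).2.2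

/-- The cumulative density ratio `ρ_t(τ) = ∏_{k=1}^t π(a_k|s_k)/πᵇ(a_k|s_k)`
(so `cumRatio … τ 0 = ρ₀ = 1`); `t` is the paper's 1-based step count. -/
def cumRatio {T : ℕ} (πb₁ π₁ : ℕ → S → A₁ → ℝ) (πb₂ π₂ : ℕ → S → A₂ → ℝ)
    (τ : Fin T → S × A₁ × A₂) (t : ℕ) : ℝ :=
  ∏ j : Fin T,
    if (j : ℕ) < t then
      (π₁ j (τ j).1 (τ j).2.1 * π₂ j (τ j).1 (τ j).2.2) /
        (πb₁ j (τ j).1 (τ j).2.1 * πb₂ j (τ j).1 (τ j).2.2)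
    else 1

/-- Backward recursion for the target profile's true state values:
`Vaux PT R γ π₁ π₂ T m` is the paper's `V_{T+1−m}` (so `Vaux … 0 = V_{T+1} = 0`),
defined by `V_t(s) = Σ_{a,b} π₁(a|s)π₂(b|s)(R(s,a,b) + γ Σ_{s'} P_T(s'|s,a,b)V_{t+1}(s'))`. -/
def Vaux [Fintype S] [Fintype A₁] [Fintype A₂]
    (PT : S → A₁ → A₂ → S → ℝ) (R : S → A₁ → A₂ → ℝ) (γ : ℝ)
    (π₁ : ℕ → S → A₁ → ℝ) (π₂ : ℕ → S → A₂ → ℝ) (T : ℕ) : ℕ → S → ℝ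
  | 0, _ => 0
  | (m + 1), s => ∑ a : A₁, ∑ b : A₂,
      π₁ (T - (m + 1)) s a * π₂ (T - (m + 1)) s b *
        (R s a b + γ * ∑ s' : S, PT s a b s' * Vaux PT R γ π₁ π₂ T m s')

/-- The state value function `V` of the target profile, 0-indexed:
`Vfun … k` is the paper's `V_{k+1}`. -/
def Vfun [Fintype S] [Fintype A₁] [Fintype A₂]
    (PT : S → A₁ → A₂ → S → ℝ) (R : S → A₁ → A₂ → ℝ) (γ : ℝ)
    (π₁ : ℕ → S → A₁ → ℝ) (π₂ : ℕ → S → A₂ → ℝ) (T : ℕ) (k : ℕ) (s : S) : ℝ :=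
  Vaux PT R γ π₁ π₂ T (T - k) s

/-- The state-action value function `Q` of the target profile, 0-indexed:
`Qfun … k` is the paper's `Q_{k+1}`, with
`Q_t(s,a,b) = R(s,a,b) + γ Σ_{s'} P_T(s'|s,a,b) V_{t+1}(s')`. -/
def Qfun [Fintype S] [Fintype A₁] [Fintype A₂]
    (PT : S → A₁ → A₂ → S → ℝ) (R : S → A₁ → A₂ → ℝ) (γ : ℝ)
    (π₁ : ℕ → S → A₁ → ℝ) (π₂ : ℕ → S → A₂ → ℝ) (T : ℕ)
    (k : ℕ) (s : S) (a : A₁) (b : A₂) : ℝ :=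
  R s a b + γ * ∑ s' : S, PT s a b s' * Vaux PT R γ π₁ π₂ T (T - k - 1) s'

lemma trajProb_snoc (PI : S → ℝ) (PT : S → A₁ → A₂ → S → ℝ)
    (σ₁ : ℕ → S → A₁ → ℝ) (σ₂ : ℕ → S → A₂ → ℝ) (n : ℕ)
    (τ : Fin (n+1) → S × A₁ × A₂) (x : S × A₁ × A₂) :
    trajProb (T := n+2) PI PT σ₁ σ₂ (Fin.snoc τ x) =
      trajProb (T := n+1) PI PT σ₁ σ₂ τ *
        (σ₁ (n+1) x.1 x.2.1 * σ₂ (n+1) x.1 x.2.2 *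
          PT (τ (Fin.last n)).1 (τ (Fin.last n)).2.1 (τ (Fin.last n)).2.2 x.1) := by
  unfold trajProb
  have h0 : (Fin.snoc τ x : Fin (n+2) → S × A₁ × A₂) 0 = τ 0 := by
    have : (0 : Fin (n+2)) = Fin.castSucc 0 := rfl
    rw [this, Fin.snoc_castSucc]
  rw [h0]
  have hσ : (∏ k : Fin (n+2), σ₁ ↑k ((Fin.snoc τ x : Fin (n+2) → _) k).1
        ((Fin.snoc τ x : Fin (n+2) → _) k).2.1 *
        σ₂ ↑k ((Fin.snoc τ x : Fin (n+2) → _) k).1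
        ((Fin.snoc τ x : Fin (n+2) → _) k).2.2)
      = (∏ k : Fin (n+1), σ₁ ↑k (τ k).1 (τ k).2.1 * σ₂ ↑k (τ k).1 (τ k).2.2) *
        (σ₁ (n+1) x.1 x.2.1 * σ₂ (n+1) x.1 x.2.2) := by
    rw [Fin.prod_univ_castSucc]
    simp [Fin.snoc_castSucc, Fin.snoc_last]
  have hPT : (∏ k : Fin (n+2), if h : (k : ℕ) + 1 < n+2 then
        PT ((Fin.snoc τ x : Fin (n+2) → _) k).1 ((Fin.snoc τ x : Fin (n+2) → _) k).2.1
          ((Fin.snoc τ x : Fin (n+2) → _) k).2.2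
          ((Fin.snoc τ x : Fin (n+2) → _) ⟨(k:ℕ) + 1, h⟩).1 else 1)
      = (∏ k : Fin (n+1), if h : (k : ℕ) + 1 < n+1 then
          PT (τ k).1 (τ k).2.1 (τ k).2.2 (τ ⟨(k:ℕ) + 1, h⟩).1 else 1) *
        PT (τ (Fin.last n)).1 (τ (Fin.last n)).2.1 (τ (Fin.last n)).2.2 x.1 := by
    rw [Fin.prod_univ_castSucc, Fin.prod_univ_castSucc (n := n),
      Fin.prod_univ_castSucc (n := n)]
    have hlast2 : ¬ ((Fin.last (n+1) : ℕ) + 1 < n + 2) := by simp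
    have hlast1 : ¬ ((Fin.last n : ℕ) + 1 < n + 1) := by simp
    rw [dif_neg hlast2, dif_neg hlast1]
    have hmid : ((Fin.castSucc (Fin.last n) : Fin (n+2)) : ℕ) + 1 < n + 2 := by simp
    rw [dif_pos hmid]
    have e1 : (⟨((Fin.castSucc (Fin.last n) : Fin (n+2)) : ℕ) + 1, hmid⟩ : Fin (n+2))
        = Fin.last (n+1) := by ext; simp
    rw [e1, Fin.snoc_last, Fin.snoc_castSucc]
    have hfac : ∀ j : Fin n,
        (if h : ((Fin.castSucc (Fin.castSucc j) : Fin (n+2)) : ℕ) + 1 < n+2 then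
          PT ((Fin.snoc τ x : Fin (n+2) → _) (Fin.castSucc (Fin.castSucc j))).1
            ((Fin.snoc τ x : Fin (n+2) → _) (Fin.castSucc (Fin.castSucc j))).2.1
            ((Fin.snoc τ x : Fin (n+2) → _) (Fin.castSucc (Fin.castSucc j))).2.2
            ((Fin.snoc τ x : Fin (n+2) → _) ⟨((Fin.castSucc (Fin.castSucc j) : Fin (n+2)) : ℕ) + 1, h⟩).1
          else 1)
        = (if h : ((Fin.castSucc j : Fin (n+1)) : ℕ) + 1 < n+1 then
            PT (τ (Fin.castSucc j)).1 (τ (Fin.castSucc j)).2.1 (τ (Fin.castSucc j)).2.2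
              (τ ⟨((Fin.castSucc j : Fin (n+1)) : ℕ) + 1, h⟩).1 else 1) := by
      intro j
      have h2 : ((Fin.castSucc (Fin.castSucc j) : Fin (n+2)) : ℕ) + 1 < n+2 := by
        simp only [Fin.coe_castSucc]; omega
      have h1 : ((Fin.castSucc j : Fin (n+1)) : ℕ) + 1 < n+1 := by
        simp only [Fin.coe_castSucc]; omega
      rw [dif_pos h2, dif_pos h1]
      have e2 : (⟨((Fin.castSucc (Fin.castSucc j) : Fin (n+2)) : ℕ) + 1, h2⟩ : Fin (n+2))
          = Fin.castSucc ⟨((Fin.castSucc j : Fin (n+1)) : ℕ) + 1, h1⟩ := by ext; simp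
      rw [e2, Fin.snoc_castSucc, Fin.snoc_castSucc]
    rw [Finset.prod_congr rfl (fun j _ => hfac j)]
    ring
  rw [hσ, hPT]
  ring


lemma sum_prod3 [Fintype S] [Fintype A₁] [Fintype A₂] (f : S → A₁ → A₂ → ℝ) :
    ∑ x : S × A₁ × A₂, f x.1 x.2.1 x.2.2 = ∑ s : S, ∑ a : A₁, ∑ b : A₂, f s a b := by
  rw [Fintype.sum_prod_type]
  exact Finset.sum_congr rfl fun s _ => by rw [Fintype.sum_prod_type]

lemma sum_trajProb_mul [Fintype S] [Fintype A₁] [Fintype A₂]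
    (PI : S → ℝ) (PT : S → A₁ → A₂ → S → ℝ)
    (hPT1 : ∀ s a b, ∑ s' : S, PT s a b s' = 1)
    (σ₁ : ℕ → S → A₁ → ℝ) (hσ₁ : ∀ t s, ∑ a : A₁, σ₁ t s a = 1)
    (σ₂ : ℕ → S → A₂ → ℝ) (hσ₂ : ∀ t s, ∑ b : A₂, σ₂ t s b = 1) :
    ∀ (n : ℕ) (k : Fin (n+1)) (g : S → A₁ → A₂ → ℝ),
      (∑ τ : Fin (n+1) → S × A₁ × A₂,
        trajProb PI PT σ₁ σ₂ τ * g (τ k).1 (τ k).2.1 (τ k).2.2)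
      = ∑ s : S, ∑ a : A₁, ∑ b : A₂, marg PI PT σ₁ σ₂ (k : ℕ) s a b * g s a b := by
  intro n
  induction n with
  | zero =>
    intro k g
    have hk : k = 0 := Fin.fin_one_eq_zero k
    subst hk
    have e1 : (∑ τ : Fin 1 → S × A₁ × A₂,
          trajProb PI PT σ₁ σ₂ τ * g (τ 0).1 (τ 0).2.1 (τ 0).2.2)
        = ∑ x : S × A₁ × A₂,
            trajProb PI PT σ₁ σ₂ (fun _ : Fin 1 => (x.1, x.2.1, x.2.2)) *
              g x.1 x.2.1 x.2.2 := by
      refine Fintype.sum_equiv (Equiv.funUnique (Fin 1) (S × A₁ × A₂)) _ _ fun τ => ?_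
      have hτ : (fun _ : Fin 1 => τ 0) = τ :=
        funext fun i => congrArg τ (Fin.fin_one_eq_zero i).symm
      show trajProb PI PT σ₁ σ₂ τ * g (τ 0).1 (τ 0).2.1 (τ 0).2.2
        = trajProb PI PT σ₁ σ₂ (fun _ : Fin 1 => ((τ 0).1, (τ 0).2.1, (τ 0).2.2)) *
            g (τ 0).1 (τ 0).2.1 (τ 0).2.2
      rw [show (fun _ : Fin 1 => ((τ 0).1, (τ 0).2.1, (τ 0).2.2)) = τ from hτ]
    rw [e1, sum_prod3 (fun s a b =>
      trajProb PI PT σ₁ σ₂ (fun _ : Fin 1 => (s, a, b)) * g s a b)]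
    refine Finset.sum_congr rfl fun s _ => ?_
    refine Finset.sum_congr rfl fun a _ => ?_
    refine Finset.sum_congr rfl fun b _ => ?_
    simp only [trajProb, marg]
    norm_num
    left
    ring
  | succ m ih =>
    intro k g
    rw [← Equiv.sum_comp (Fin.snocEquiv (fun _ : Fin (m+2) => S × A₁ × A₂))]
    rw [Fintype.sum_prod_type]
    have hse : ∀ (x : S × A₁ × A₂) (τ : Fin (m+1) → S × A₁ × A₂),
        (Fin.snocEquiv (fun _ : Fin (m+2) => S × A₁ × A₂)) (x, τ) = Fin.snoc τ x :=
      fun x τ => funext fun i => rfl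
    simp only [hse]
    rcases Fin.eq_castSucc_or_eq_last k with ⟨j, rfl⟩ | rfl
    · -- marginalize out the last step
      have hstep : ∀ x : S × A₁ × A₂, ∀ τ : Fin (m+1) → S × A₁ × A₂,
          trajProb PI PT σ₁ σ₂ (Fin.snoc τ x) *
            g ((Fin.snoc τ x : Fin (m+2) → _) (Fin.castSucc j)).1
              ((Fin.snoc τ x : Fin (m+2) → _) (Fin.castSucc j)).2.1
              ((Fin.snoc τ x : Fin (m+2) → _) (Fin.castSucc j)).2.2
          = trajProb PI PT σ₁ σ₂ τ * g (τ j).1 (τ j).2.1 (τ j).2.2 *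
              (σ₁ (m+1) x.1 x.2.1 * σ₂ (m+1) x.1 x.2.2 *
                PT (τ (Fin.last m)).1 (τ (Fin.last m)).2.1 (τ (Fin.last m)).2.2 x.1) := by
        intro x τ
        rw [trajProb_snoc, Fin.snoc_castSucc]
        ring
      simp only [hstep]
      rw [Finset.sum_comm]
      have hone : ∀ τ : Fin (m+1) → S × A₁ × A₂,
          (∑ x : S × A₁ × A₂, trajProb PI PT σ₁ σ₂ τ * g (τ j).1 (τ j).2.1 (τ j).2.2 *
              (σ₁ (m+1) x.1 x.2.1 * σ₂ (m+1) x.1 x.2.2 *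
                PT (τ (Fin.last m)).1 (τ (Fin.last m)).2.1 (τ (Fin.last m)).2.2 x.1))
          = trajProb PI PT σ₁ σ₂ τ * g (τ j).1 (τ j).2.1 (τ j).2.2 := by
        intro τ
        rw [← Finset.mul_sum]
        rw [sum_prod3 (fun s a b => σ₁ (m+1) s a * σ₂ (m+1) s b *
          PT (τ (Fin.last m)).1 (τ (Fin.last m)).2.1 (τ (Fin.last m)).2.2 s)]
        have : (∑ s : S, ∑ a : A₁, ∑ b : A₂, σ₁ (m+1) s a * σ₂ (m+1) s b *
            PT (τ (Fin.last m)).1 (τ (Fin.last m)).2.1 (τ (Fin.last m)).2.2 s) = 1 := by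
          have h1 := hPT1 (τ (Fin.last m)).1 (τ (Fin.last m)).2.1 (τ (Fin.last m)).2.2
          rw [← h1]
          refine Finset.sum_congr rfl fun s _ => ?_
          have h2 : ∀ a : A₁, (∑ b : A₂, σ₁ (m+1) s a * σ₂ (m+1) s b *
              PT (τ (Fin.last m)).1 (τ (Fin.last m)).2.1 (τ (Fin.last m)).2.2 s)
              = σ₁ (m+1) s a *
                PT (τ (Fin.last m)).1 (τ (Fin.last m)).2.1 (τ (Fin.last m)).2.2 s := by
            intro a
            rw [← Finset.sum_mul, ← Finset.mul_sum, hσ₂, mul_one]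
          rw [Finset.sum_congr rfl (fun a _ => h2 a), ← Finset.sum_mul, hσ₁, one_mul]
        rw [this, mul_one]
      simp only [hone]
      rw [ih j g]
      simp
    · -- evaluate at the last step
      have hstep : ∀ x : S × A₁ × A₂, ∀ τ : Fin (m+1) → S × A₁ × A₂,
          trajProb PI PT σ₁ σ₂ (Fin.snoc τ x) *
            g ((Fin.snoc τ x : Fin (m+2) → _) (Fin.last (m+1))).1
              ((Fin.snoc τ x : Fin (m+2) → _) (Fin.last (m+1))).2.1
              ((Fin.snoc τ x : Fin (m+2) → _) (Fin.last (m+1))).2.2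
          = (σ₁ (m+1) x.1 x.2.1 * σ₂ (m+1) x.1 x.2.2 * g x.1 x.2.1 x.2.2) *
              (trajProb PI PT σ₁ σ₂ τ *
                PT (τ (Fin.last m)).1 (τ (Fin.last m)).2.1 (τ (Fin.last m)).2.2 x.1) := by
        intro x τ
        rw [trajProb_snoc, Fin.snoc_last]
        ring
      simp only [hstep]
      have hin : ∀ x : S × A₁ × A₂,
          (∑ τ : Fin (m+1) → S × A₁ × A₂,
            (σ₁ (m+1) x.1 x.2.1 * σ₂ (m+1) x.1 x.2.2 * g x.1 x.2.1 x.2.2) *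
              (trajProb PI PT σ₁ σ₂ τ *
                PT (τ (Fin.last m)).1 (τ (Fin.last m)).2.1 (τ (Fin.last m)).2.2 x.1))
          = (σ₁ (m+1) x.1 x.2.1 * σ₂ (m+1) x.1 x.2.2 * g x.1 x.2.1 x.2.2) *
              ∑ s' : S, ∑ a' : A₁, ∑ b' : A₂,
                marg PI PT σ₁ σ₂ m s' a' b' * PT s' a' b' x.1 := by
        intro x
        rw [← Finset.mul_sum]
        congr 1
        have := ih (Fin.last m) (fun s a b => PT s a b x.1)
        simpa using this
      simp only [hin]
      rw [sum_prod3 (fun s a b => σ₁ (m+1) s a * σ₂ (m+1) s b * g s a b *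
        ∑ s' : S, ∑ a' : A₁, ∑ b' : A₂, marg PI PT σ₁ σ₂ m s' a' b' * PT s' a' b' s)]
      refine Finset.sum_congr rfl fun s _ => ?_
      refine Finset.sum_congr rfl fun a _ => ?_
      refine Finset.sum_congr rfl fun b _ => ?_
      show _ = marg PI PT σ₁ σ₂ ((Fin.last (m+1) : Fin (m+2)) : ℕ) s a b * g s a b
      rw [Fin.val_last]
      show _ = marg PI PT σ₁ σ₂ (m+1) s a b * g s a b
      rw [marg]
      have hc : (∑ s' : S, ∑ a' : A₁, ∑ b' : A₂, marg PI PT σ₁ σ₂ m s' a' b' * PT s' a' b' s)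
          = ∑ s' : S, ∑ a' : A₁, ∑ b' : A₂, PT s' a' b' s * marg PI PT σ₁ σ₂ m s' a' b' := by
        refine Finset.sum_congr rfl fun _ _ => Finset.sum_congr rfl fun _ _ =>
          Finset.sum_congr rfl fun _ _ => mul_comm _ _
      rw [hc]
      ring

lemma sum_trajProb_eval [Fintype S] [Fintype A₁] [Fintype A₂]
    (PI : S → ℝ) (PT : S → A₁ → A₂ → S → ℝ)
    (hPT1 : ∀ s a b, ∑ s' : S, PT s a b s' = 1)
    (σ₁ : ℕ → S → A₁ → ℝ) (hσ₁ : ∀ t s, ∑ a : A₁, σ₁ t s a = 1)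
    (σ₂ : ℕ → S → A₂ → ℝ) (hσ₂ : ∀ t s, ∑ b : A₂, σ₂ t s b = 1)
    (T : ℕ) [NeZero T] (k : Fin T) (g : S → A₁ → A₂ → ℝ) :
    (∑ τ : Fin T → S × A₁ × A₂,
      trajProb PI PT σ₁ σ₂ τ * g (τ k).1 (τ k).2.1 (τ k).2.2)
    = ∑ s : S, ∑ a : A₁, ∑ b : A₂, marg PI PT σ₁ σ₂ (k : ℕ) s a b * g s a b := by
  obtain ⟨n, rfl⟩ := Nat.exists_eq_succ_of_ne_zero (NeZero.ne T)
  exact sum_trajProb_mul PI PT hPT1 σ₁ hσ₁ σ₂ hσ₂ n k g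

lemma marg_congr [Fintype S] [Fintype A₁] [Fintype A₂]
    (PI : S → ℝ) (PT : S → A₁ → A₂ → S → ℝ)
    (σ₁ σ₁' : ℕ → S → A₁ → ℝ) (σ₂ σ₂' : ℕ → S → A₂ → ℝ) (k : ℕ)
    (h1 : ∀ t, t ≤ k → σ₁ t = σ₁' t) (h2 : ∀ t, t ≤ k → σ₂ t = σ₂' t) :
    marg PI PT σ₁ σ₂ k = marg PI PT σ₁' σ₂' k := by
  induction k with
  | zero => funext s a b; simp only [marg, h1 0 le_rfl, h2 0 le_rfl]
  | succ m ih =>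
    funext s a b
    simp only [marg]
    rw [h1 (m+1) le_rfl, h2 (m+1) le_rfl,
      ih (fun t ht => h1 t (ht.trans (Nat.le_succ m)))
        (fun t ht => h2 t (ht.trans (Nat.le_succ m)))]

lemma trajProb_mul_cumRatio {T : ℕ} [NeZero T]
    (PI : S → ℝ) (PT : S → A₁ → A₂ → S → ℝ)
    (π₁ : ℕ → S → A₁ → ℝ) (π₂ : ℕ → S → A₂ → ℝ)
    (πb₁ : ℕ → S → A₁ → ℝ) (hb₁ : ∀ t s a, 0 < πb₁ t s a)
    (πb₂ : ℕ → S → A₂ → ℝ) (hb₂ : ∀ t s b, 0 < πb₂ t s b)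
    (τ : Fin T → S × A₁ × A₂) (k : ℕ) :
    trajProb PI PT πb₁ πb₂ τ * cumRatio πb₁ π₁ πb₂ π₂ τ (k + 1)
      = trajProb PI PT (fun t => if t ≤ k then π₁ t else πb₁ t)
          (fun t => if t ≤ k then π₂ t else πb₂ t) τ := by
  have key : (∏ j : Fin T, πb₁ ↑j (τ j).1 (τ j).2.1 * πb₂ ↑j (τ j).1 (τ j).2.2) *
      (∏ j : Fin T, if (j : ℕ) < k + 1 then
        (π₁ ↑j (τ j).1 (τ j).2.1 * π₂ ↑j (τ j).1 (τ j).2.2) /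
          (πb₁ ↑j (τ j).1 (τ j).2.1 * πb₂ ↑j (τ j).1 (τ j).2.2) else 1)
      = ∏ j : Fin T,
          (if (j : ℕ) ≤ k then π₁ ↑j else πb₁ ↑j) (τ j).1 (τ j).2.1 *
            (if (j : ℕ) ≤ k then π₂ ↑j else πb₂ ↑j) (τ j).1 (τ j).2.2 := by
    rw [← Finset.prod_mul_distrib]
    refine Finset.prod_congr rfl fun j _ => ?_
    by_cases h : (j : ℕ) ≤ k
    · rw [if_pos (Nat.lt_succ_of_le h), if_pos h, if_pos h]
      have hne : πb₁ ↑j (τ j).1 (τ j).2.1 * πb₂ ↑j (τ j).1 (τ j).2.2 ≠ 0 :=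
        (mul_pos (hb₁ _ _ _) (hb₂ _ _ _)).ne'
      rw [mul_comm, div_mul_cancel₀ _ hne]
    · rw [if_neg (fun hlt => h (Nat.lt_succ_iff.mp hlt)), if_neg h, if_neg h, mul_one]
  unfold trajProb cumRatio
  rw [← key]
  ring


end TZMG
end

open TZMG in
/-- Unbiasedness of the importance sampling estimator: the expectation under the
behavior profile `(πb₁,πb₂)` of the importance-weighted discounted reward equals the
target profile's value:
`Σ_τ p_{πᵇ}(τ) Σ_{t=1}^T γ^{t−1} ρ_t(τ) R(s_t,a_t¹,a_t²) = v₁(π₁,π₂)`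
(0-indexed: `t−1 = k`, so `ρ_t = cumRatio … τ (k+1)`). -/
theorem importance_sampling_unbiased
    {S A₁ A₂ : Type*} [Fintype S] [Fintype A₁] [Fintype A₂] [Nonempty S]
    [Nonempty A₁] [Nonempty A₂]
    (T : ℕ) [NeZero T] (γ : ℝ)
    (PI : S → ℝ) (hPI0 : ∀ s, 0 ≤ PI s) (hPI1 : ∑ s : S, PI s = 1)
    (PT : S → A₁ → A₂ → S → ℝ) (hPT0 : ∀ s a b s', 0 ≤ PT s a b s')
    (hPT1 : ∀ s a b, ∑ s' : S, PT s a b s' = 1)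
    (R : S → A₁ → A₂ → ℝ)
    (π₁ : ℕ → S → A₁ → ℝ) (hπ₁0 : ∀ t s a, 0 ≤ π₁ t s a)
    (hπ₁1 : ∀ t s, ∑ a : A₁, π₁ t s a = 1)
    (π₂ : ℕ → S → A₂ → ℝ) (hπ₂0 : ∀ t s b, 0 ≤ π₂ t s b)
    (hπ₂1 : ∀ t s, ∑ b : A₂, π₂ t s b = 1)
    (πb₁ : ℕ → S → A₁ → ℝ) (hπb₁0 : ∀ t s a, 0 < πb₁ t s a)
    (hπb₁1 : ∀ t s, ∑ a : A₁, πb₁ t s a = 1)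
    (πb₂ : ℕ → S → A₂ → ℝ) (hπb₂0 : ∀ t s b, 0 < πb₂ t s b)
    (hπb₂1 : ∀ t s, ∑ b : A₂, πb₂ t s b = 1) :
    (∑ τ : Fin T → S × A₁ × A₂, trajProb PI PT πb₁ πb₂ τ *
        ∑ k : Fin T, γ ^ (k : ℕ) * cumRatio πb₁ π₁ πb₂ π₂ τ ((k : ℕ) + 1) *
          R (τ k).1 (τ k).2.1 (τ k).2.2) =
      value T PI PT R γ π₁ π₂ := by
  have hmix₁ : ∀ (k : ℕ) (t : ℕ) (s : S),
      (∑ a : A₁, (if t ≤ k then π₁ t else πb₁ t) s a) = 1 := by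
    intro k t s; by_cases h : t ≤ k <;> simp [h, hπ₁1, hπb₁1]
  have hmix₂ : ∀ (k : ℕ) (t : ℕ) (s : S),
      (∑ b : A₂, (if t ≤ k then π₂ t else πb₂ t) s b) = 1 := by
    intro k t s; by_cases h : t ≤ k <;> simp [h, hπ₂1, hπb₂1]
  have L : (∑ τ : Fin T → S × A₁ × A₂, trajProb PI PT πb₁ πb₂ τ *
        ∑ k : Fin T, γ ^ (k : ℕ) * cumRatio πb₁ π₁ πb₂ π₂ τ ((k : ℕ) + 1) *
          R (τ k).1 (τ k).2.1 (τ k).2.2)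
      = ∑ k : Fin T, ∑ τ : Fin T → S × A₁ × A₂, trajProb PI PT πb₁ πb₂ τ *
          (γ ^ (k : ℕ) * cumRatio πb₁ π₁ πb₂ π₂ τ ((k : ℕ) + 1) *
            R (τ k).1 (τ k).2.1 (τ k).2.2) := by
    simp_rw [Finset.mul_sum]
    exact Finset.sum_comm
  have Rv : value T PI PT R γ π₁ π₂
      = ∑ k : Fin T, ∑ τ : Fin T → S × A₁ × A₂, trajProb PI PT π₁ π₂ τ *
          (γ ^ (k : ℕ) * R (τ k).1 (τ k).2.1 (τ k).2.2) := by
    unfold value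
    simp_rw [Finset.mul_sum]
    exact Finset.sum_comm
  rw [L, Rv]
  refine Finset.sum_congr rfl fun k _ => ?_
  have hstep : ∀ τ : Fin T → S × A₁ × A₂,
      trajProb PI PT πb₁ πb₂ τ *
        (γ ^ (k : ℕ) * cumRatio πb₁ π₁ πb₂ π₂ τ ((k : ℕ) + 1) *
          R (τ k).1 (τ k).2.1 (τ k).2.2)
      = γ ^ (k : ℕ) *
          (trajProb PI PT (fun t => if t ≤ (k : ℕ) then π₁ t else πb₁ t)
            (fun t => if t ≤ (k : ℕ) then π₂ t else πb₂ t) τ *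
            R (τ k).1 (τ k).2.1 (τ k).2.2) := by
    intro τ
    rw [← trajProb_mul_cumRatio PI PT π₁ π₂ πb₁ hπb₁0 πb₂ hπb₂0 τ (k : ℕ)]
    ring
  have hstep2 : ∀ τ : Fin T → S × A₁ × A₂,
      trajProb PI PT π₁ π₂ τ * (γ ^ (k : ℕ) * R (τ k).1 (τ k).2.1 (τ k).2.2)
      = γ ^ (k : ℕ) *
          (trajProb PI PT π₁ π₂ τ * R (τ k).1 (τ k).2.1 (τ k).2.2) := fun τ => by ring
  simp only [hstep, hstep2]
  rw [← Finset.mul_sum, ← Finset.mul_sum]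
  congr 1
  rw [sum_trajProb_eval PI PT hPT1 _ (hmix₁ (k : ℕ)) _ (hmix₂ (k : ℕ)) T k R,
    sum_trajProb_eval PI PT hPT1 π₁ hπ₁1 π₂ hπ₂1 T k R,
    marg_congr PI PT _ π₁ _ π₂ (k : ℕ) (fun t ht => if_pos ht) (fun t ht => if_pos ht)]
end

section
/- The marginalized importance sampling estimator is unbiased: if the behavior-profile marginals are strictly positive, p^{πᵇ}_t(s,a¹,a²) > 0 for all t, s, a¹, a², and μ_t(s,a¹,a²) = p^{π}_t(s,a¹,a²)/p^{πᵇ}_t(s,a¹,a²) denotes the marginal density ratio, then Σ_τ p_{πᵇ}(τ) · Σ_{t=1}^T γ^{t−1} μ_t(s_t,a_t¹,a_t²) R(s_t,a_t¹,a_t²) = v₁(π₁,π₂). -/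
open Finset

section MISAux
open TZMG Finset

variable {S A₁ A₂ : Type*} [Fintype S] [Fintype A₁] [Fintype A₂]

private lemma triple_sum (f : S → A₁ → A₂ → ℝ) :
    ∑ s : S, ∑ a : A₁, ∑ b : A₂, f s a b = ∑ x : S × A₁ × A₂, f x.1 x.2.1 x.2.2 := by
  simp [Fintype.sum_prod_type]

private lemma marg_succ (PI : S → ℝ) (PT : S → A₁ → A₂ → S → ℝ)
    (σ₁ : ℕ → S → A₁ → ℝ) (σ₂ : ℕ → S → A₂ → ℝ) (k : ℕ) (s : S) (a : A₁) (b : A₂) :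
    marg PI PT σ₁ σ₂ (k+1) s a b = σ₁ (k + 1) s a * σ₂ (k + 1) s b *
      ∑ x : S × A₁ × A₂, PT x.1 x.2.1 x.2.2 s * marg PI PT σ₁ σ₂ k x.1 x.2.1 x.2.2 := by
  rw [marg, triple_sum (f := fun s' a' b' => PT s' a' b' s * marg PI PT σ₁ σ₂ k s' a' b')]

private lemma marg_shift (PI : S → ℝ) (PT : S → A₁ → A₂ → S → ℝ)
    (σ₁ : ℕ → S → A₁ → ℝ) (σ₂ : ℕ → S → A₂ → ℝ) (j : ℕ) (s : S) (a : A₁) (b : A₂) :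
    marg PI PT σ₁ σ₂ (j+1) s a b =
      ∑ x₀ : S × A₁ × A₂, marg PI PT σ₁ σ₂ 0 x₀.1 x₀.2.1 x₀.2.2 *
        marg (fun s' => PT x₀.1 x₀.2.1 x₀.2.2 s') PT (fun t => σ₁ (t+1)) (fun t => σ₂ (t+1))
          j s a b := by
  induction j generalizing s a b with
  | zero =>
      rw [marg_succ]
      simp only [marg, Finset.mul_sum]
      refine Finset.sum_congr rfl fun x₀ _ => ?_
      ring
  | succ j ih =>
      rw [marg_succ]
      simp only [ih, Finset.mul_sum]
      rw [Finset.sum_comm]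
      refine Finset.sum_congr rfl fun x₀ _ => ?_
      rw [marg_succ]
      simp only [Finset.mul_sum]
      refine Finset.sum_congr rfl fun x _ => ?_
      ring

private lemma marg_zero_sum (PI : S → ℝ) (hPI1 : ∑ s : S, PI s = 1)
    (PT : S → A₁ → A₂ → S → ℝ)
    (σ₁ : ℕ → S → A₁ → ℝ) (hσ₁1 : ∀ s, ∑ a : A₁, σ₁ 0 s a = 1)
    (σ₂ : ℕ → S → A₂ → ℝ) (hσ₂1 : ∀ s, ∑ b : A₂, σ₂ 0 s b = 1) :
    ∑ x : S × A₁ × A₂, marg PI PT σ₁ σ₂ 0 x.1 x.2.1 x.2.2 = 1 := by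
  rw [← triple_sum]
  simp only [marg, mul_assoc, ← Finset.mul_sum, ← Finset.sum_mul, hσ₁1, hσ₂1, one_mul]
  exact hPI1

private lemma trajProb_cons (n : ℕ) (PI : S → ℝ) (PT : S → A₁ → A₂ → S → ℝ)
    (σ₁ : ℕ → S → A₁ → ℝ) (σ₂ : ℕ → S → A₂ → ℝ)
    (x : S × A₁ × A₂) (τ' : Fin (n+1) → S × A₁ × A₂) :
    trajProb (T := n+2) PI PT σ₁ σ₂ (Fin.cons x τ') =
      (σ₁ 0 x.1 x.2.1 * σ₂ 0 x.1 x.2.2 * PI x.1) *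
        trajProb (fun s' => PT x.1 x.2.1 x.2.2 s') PT
          (fun t => σ₁ (t+1)) (fun t => σ₂ (t+1)) τ' := by
  unfold trajProb
  rw [Fin.prod_univ_succ (n := n+1), Fin.prod_univ_succ (n := n+1)]
  have e0 : (if h : ((0:Fin (n+2)):ℕ)+1 < n+2 then
      PT ((Fin.cons x τ' : Fin (n+2) → S × A₁ × A₂) 0).1
        ((Fin.cons x τ' : Fin (n+2) → S × A₁ × A₂) 0).2.1
        ((Fin.cons x τ' : Fin (n+2) → S × A₁ × A₂) 0).2.2
        ((Fin.cons x τ' : Fin (n+2) → S × A₁ × A₂) ⟨((0:Fin (n+2)):ℕ)+1, h⟩).1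
      else 1) = PT x.1 x.2.1 x.2.2 (τ' 0).1 := by
    rw [dif_pos (by simp)]; rfl
  have e1 : ∀ i : Fin (n+1), (if h : ((Fin.succ i : Fin (n+2)) : ℕ)+1 < n+2 then
      PT ((Fin.cons x τ' : Fin (n+2) → S × A₁ × A₂) i.succ).1
        ((Fin.cons x τ' : Fin (n+2) → S × A₁ × A₂) i.succ).2.1
        ((Fin.cons x τ' : Fin (n+2) → S × A₁ × A₂) i.succ).2.2
        ((Fin.cons x τ' : Fin (n+2) → S × A₁ × A₂) ⟨((Fin.succ i : Fin (n+2)) : ℕ)+1, h⟩).1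
      else 1) = (if h : (i:ℕ)+1 < n+1 then
        PT (τ' i).1 (τ' i).2.1 (τ' i).2.2 (τ' ⟨i+1, h⟩).1 else 1) := by
    intro i
    by_cases h : (i:ℕ)+1 < n+1
    · rw [dif_pos h, dif_pos (by simp; omega)]; rfl
    · rw [dif_neg h, dif_neg (by simp; omega)]
  rw [e0, Finset.prod_congr rfl (fun i _ => e1 i)]
  simp only [Fin.cons_zero, Fin.cons_succ, Fin.val_succ, Fin.val_zero]
  ring

private lemma key (PT : S → A₁ → A₂ → S → ℝ)
    (hPT1 : ∀ s a b, ∑ s' : S, PT s a b s' = 1) :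
    ∀ (n : ℕ) (σ₁ : ℕ → S → A₁ → ℝ), (∀ t s, ∑ a : A₁, σ₁ t s a = 1) →
    ∀ (σ₂ : ℕ → S → A₂ → ℝ), (∀ t s, ∑ b : A₂, σ₂ t s b = 1) →
    ∀ (PI : S → ℝ), (∑ s : S, PI s = 1) →
    ∀ (k : Fin (n+1)) (f : S × A₁ × A₂ → ℝ),
    ∑ τ : Fin (n+1) → S × A₁ × A₂, trajProb PI PT σ₁ σ₂ τ * f (τ k)
      = ∑ x : S × A₁ × A₂, marg PI PT σ₁ σ₂ k x.1 x.2.1 x.2.2 * f x := by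
  intro n
  induction n with
  | zero =>
      intro σ₁ hσ₁1 σ₂ hσ₂1 PI hPI1 k f
      rw [← Equiv.sum_comp (Equiv.funUnique (Fin 1) (S × A₁ × A₂)).symm
        (fun τ => trajProb PI PT σ₁ σ₂ τ * f (τ k))]
      refine Finset.sum_congr rfl fun x _ => ?_
      have hk : k = 0 := Fin.ext (by omega)
      subst hk
      have hτ : ((Equiv.funUnique (Fin 1) (S × A₁ × A₂)).symm x) = fun _ => x := rfl
      rw [hτ, trajProb]
      simp only [Fin.prod_univ_one, Fin.val_zero]
      rw [dif_neg (by omega), marg]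
      ring
  | succ n ih =>
      intro σ₁ hσ₁1 σ₂ hσ₂1 PI hPI1 k f
      have hcons : ∀ g : (Fin (n+2) → S × A₁ × A₂) → ℝ,
          ∑ τ : Fin (n+2) → S × A₁ × A₂, g τ =
            ∑ x : S × A₁ × A₂, ∑ τ' : Fin (n+1) → S × A₁ × A₂, g (Fin.cons x τ') := by
        intro g
        rw [← Equiv.sum_comp (Fin.consEquiv fun _ : Fin (n+2) => S × A₁ × A₂) g,
          Fintype.sum_prod_type]
        simp [Fin.consEquiv]
      rw [hcons]
      induction k using Fin.cases with
      | zero =>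
          simp only [Fin.cons_zero, trajProb_cons]
          have hone : ∀ x : S × A₁ × A₂,
              ∑ τ' : Fin (n+1) → S × A₁ × A₂,
                trajProb (fun s' => PT x.1 x.2.1 x.2.2 s') PT
                  (fun t => σ₁ (t+1)) (fun t => σ₂ (t+1)) τ' = 1 := by
            intro x
            have := ih (fun t => σ₁ (t+1)) (fun t s => hσ₁1 (t+1) s)
              (fun t => σ₂ (t+1)) (fun t s => hσ₂1 (t+1) s)
              (fun s' => PT x.1 x.2.1 x.2.2 s') (hPT1 _ _ _) 0 (fun _ => 1)
            simpa [marg_zero_sum (fun s' => PT x.1 x.2.1 x.2.2 s') (hPT1 _ _ _) PT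
              (fun t => σ₁ (t+1)) (fun s => hσ₁1 1 s)
              (fun t => σ₂ (t+1)) (fun s => hσ₂1 1 s)] using this
          refine Finset.sum_congr rfl fun x _ => ?_
          calc ∑ τ' : Fin (n+1) → S × A₁ × A₂,
                  σ₁ 0 x.1 x.2.1 * σ₂ 0 x.1 x.2.2 * PI x.1 *
                    trajProb (fun s' => PT x.1 x.2.1 x.2.2 s') PT
                      (fun t => σ₁ (t+1)) (fun t => σ₂ (t+1)) τ' * f x
              = (σ₁ 0 x.1 x.2.1 * σ₂ 0 x.1 x.2.2 * PI x.1 * f x) *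
                  ∑ τ' : Fin (n+1) → S × A₁ × A₂,
                    trajProb (fun s' => PT x.1 x.2.1 x.2.2 s') PT
                      (fun t => σ₁ (t+1)) (fun t => σ₂ (t+1)) τ' := by
                rw [Finset.mul_sum]
                refine Finset.sum_congr rfl fun τ' _ => ?_
                ring
            _ = marg PI PT σ₁ σ₂ 0 x.1 x.2.1 x.2.2 * f x := by
                rw [hone x, mul_one, marg]
      | succ j =>
          simp only [Fin.cons_succ, trajProb_cons]
          have hin : ∀ x : S × A₁ × A₂,
              ∑ τ' : Fin (n+1) → S × A₁ × A₂,
                trajProb (fun s' => PT x.1 x.2.1 x.2.2 s') PT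
                  (fun t => σ₁ (t+1)) (fun t => σ₂ (t+1)) τ' * f (τ' j) =
              ∑ y : S × A₁ × A₂,
                marg (fun s' => PT x.1 x.2.1 x.2.2 s') PT
                  (fun t => σ₁ (t+1)) (fun t => σ₂ (t+1)) j y.1 y.2.1 y.2.2 * f y :=
            fun x => ih (fun t => σ₁ (t+1)) (fun t s => hσ₁1 (t+1) s)
              (fun t => σ₂ (t+1)) (fun t s => hσ₂1 (t+1) s)
              (fun s' => PT x.1 x.2.1 x.2.2 s') (hPT1 _ _ _) j f
          have hval : ∀ y : S × A₁ × A₂,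
              marg PI PT σ₁ σ₂ ((j.succ : Fin (n+2)) : ℕ) y.1 y.2.1 y.2.2 =
                ∑ x : S × A₁ × A₂, marg PI PT σ₁ σ₂ 0 x.1 x.2.1 x.2.2 *
                  marg (fun s' => PT x.1 x.2.1 x.2.2 s') PT
                    (fun t => σ₁ (t+1)) (fun t => σ₂ (t+1)) j y.1 y.2.1 y.2.2 := by
            intro y
            rw [Fin.val_succ, marg_shift]
          calc ∑ x : S × A₁ × A₂, ∑ τ' : Fin (n+1) → S × A₁ × A₂,
                  σ₁ 0 x.1 x.2.1 * σ₂ 0 x.1 x.2.2 * PI x.1 *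
                    trajProb (fun s' => PT x.1 x.2.1 x.2.2 s') PT
                      (fun t => σ₁ (t+1)) (fun t => σ₂ (t+1)) τ' * f (τ' j)
              = ∑ x : S × A₁ × A₂, (σ₁ 0 x.1 x.2.1 * σ₂ 0 x.1 x.2.2 * PI x.1) *
                  ∑ y : S × A₁ × A₂,
                    marg (fun s' => PT x.1 x.2.1 x.2.2 s') PT
                      (fun t => σ₁ (t+1)) (fun t => σ₂ (t+1)) j y.1 y.2.1 y.2.2 * f y := by
                refine Finset.sum_congr rfl fun x _ => ?_
                rw [← hin x, Finset.mul_sum]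
                refine Finset.sum_congr rfl fun τ' _ => ?_
                ring
            _ = ∑ y : S × A₁ × A₂,
                  marg PI PT σ₁ σ₂ ((j.succ : Fin (n+2)) : ℕ) y.1 y.2.1 y.2.2 * f y := by
                simp only [hval, Finset.mul_sum, Finset.sum_mul]
                rw [Finset.sum_comm]
                refine Finset.sum_congr rfl fun x _ => ?_
                refine Finset.sum_congr rfl fun y _ => ?_
                rw [marg]
                ring

end MISAux

open TZMG in
/-- Unbiasedness of the marginalized importance sampling estimator: if the
behavior-profile marginals are strictly positive and
`μ_t(s,a,b) = p^π_t(s,a,b)/p^{πᵇ}_t(s,a,b)` is the marginal density ratio, then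
`Σ_τ p_{πᵇ}(τ) Σ_{t=1}^T γ^{t−1} μ_t(s_t,a_t¹,a_t²) R(s_t,a_t¹,a_t²) = v₁(π₁,π₂)`
(0-indexed: `t−1 = k`). -/
theorem marginalized_importance_sampling_unbiased
    {S A₁ A₂ : Type*} [Fintype S] [Fintype A₁] [Fintype A₂] [Nonempty S]
    [Nonempty A₁] [Nonempty A₂]
    (T : ℕ) [NeZero T] (γ : ℝ)
    (PI : S → ℝ) (hPI0 : ∀ s, 0 ≤ PI s) (hPI1 : ∑ s : S, PI s = 1)
    (PT : S → A₁ → A₂ → S → ℝ) (hPT0 : ∀ s a b s', 0 ≤ PT s a b s')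
    (hPT1 : ∀ s a b, ∑ s' : S, PT s a b s' = 1)
    (R : S → A₁ → A₂ → ℝ)
    (π₁ : ℕ → S → A₁ → ℝ) (hπ₁0 : ∀ t s a, 0 ≤ π₁ t s a)
    (hπ₁1 : ∀ t s, ∑ a : A₁, π₁ t s a = 1)
    (π₂ : ℕ → S → A₂ → ℝ) (hπ₂0 : ∀ t s b, 0 ≤ π₂ t s b)
    (hπ₂1 : ∀ t s, ∑ b : A₂, π₂ t s b = 1)
    (πb₁ : ℕ → S → A₁ → ℝ) (hπb₁0 : ∀ t s a, 0 ≤ πb₁ t s a)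
    (hπb₁1 : ∀ t s, ∑ a : A₁, πb₁ t s a = 1)
    (πb₂ : ℕ → S → A₂ → ℝ) (hπb₂0 : ∀ t s b, 0 ≤ πb₂ t s b)
    (hπb₂1 : ∀ t s, ∑ b : A₂, πb₂ t s b = 1)
    (hmargpos : ∀ (k : Fin T) (s : S) (a : A₁) (b : A₂),
      0 < marg PI PT πb₁ πb₂ k s a b) :
    (∑ τ : Fin T → S × A₁ × A₂, trajProb PI PT πb₁ πb₂ τ *
        ∑ k : Fin T, γ ^ (k : ℕ) *
          (marg PI PT π₁ π₂ k (τ k).1 (τ k).2.1 (τ k).2.2 /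
            marg PI PT πb₁ πb₂ k (τ k).1 (τ k).2.1 (τ k).2.2) *
          R (τ k).1 (τ k).2.1 (τ k).2.2) =
      value T PI PT R γ π₁ π₂ := by
  obtain ⟨n, rfl⟩ : ∃ n, T = n + 1 := ⟨T - 1, (Nat.succ_pred_eq_of_pos (NeZero.pos T)).symm⟩
  have hL : (∑ τ : Fin (n+1) → S × A₁ × A₂, trajProb PI PT πb₁ πb₂ τ *
        ∑ k : Fin (n+1), γ ^ (k : ℕ) *
          (marg PI PT π₁ π₂ k (τ k).1 (τ k).2.1 (τ k).2.2 /
            marg PI PT πb₁ πb₂ k (τ k).1 (τ k).2.1 (τ k).2.2) *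
          R (τ k).1 (τ k).2.1 (τ k).2.2) =
      ∑ k : Fin (n+1), ∑ x : S × A₁ × A₂,
        γ ^ (k:ℕ) * marg PI PT π₁ π₂ k x.1 x.2.1 x.2.2 * R x.1 x.2.1 x.2.2 := by
    simp only [Finset.mul_sum]
    rw [Finset.sum_comm]
    refine Finset.sum_congr rfl fun k _ => ?_
    trans (∑ x : S × A₁ × A₂, marg PI PT πb₁ πb₂ k x.1 x.2.1 x.2.2 *
      (γ ^ (k:ℕ) * (marg PI PT π₁ π₂ k x.1 x.2.1 x.2.2 /
        marg PI PT πb₁ πb₂ k x.1 x.2.1 x.2.2) * R x.1 x.2.1 x.2.2))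
    · exact key PT hPT1 n πb₁ hπb₁1 πb₂ hπb₂1 PI hPI1 k
        (fun x => γ ^ (k:ℕ) * (marg PI PT π₁ π₂ k x.1 x.2.1 x.2.2 /
          marg PI PT πb₁ πb₂ k x.1 x.2.1 x.2.2) * R x.1 x.2.1 x.2.2)
    · refine Finset.sum_congr rfl fun x _ => ?_
      have h0 := (hmargpos k x.1 x.2.1 x.2.2).ne'
      field_simp
  have hR : value (n+1) PI PT R γ π₁ π₂ =
      ∑ k : Fin (n+1), ∑ x : S × A₁ × A₂,
        γ ^ (k:ℕ) * marg PI PT π₁ π₂ k x.1 x.2.1 x.2.2 * R x.1 x.2.1 x.2.2 := by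
    rw [value]
    simp only [Finset.mul_sum]
    rw [Finset.sum_comm]
    refine Finset.sum_congr rfl fun k _ => ?_
    trans (∑ x : S × A₁ × A₂, marg PI PT π₁ π₂ k x.1 x.2.1 x.2.2 *
      (γ ^ (k:ℕ) * R x.1 x.2.1 x.2.2))
    · exact key PT hPT1 n π₁ hπ₁1 π₂ hπ₂1 PI hPI1 k
        (fun x => γ ^ (k:ℕ) * R x.1 x.2.1 x.2.2)
    · refine Finset.sum_congr rfl fun x _ => ?_
      ring
  rw [hL, hR]
end

section
/- The oracle double reinforcement learning estimator is unbiased: if the behavior-profile marginals are strictly positive, p^{πᵇ}_t(s,a¹,a²) > 0 for all t, s, a¹, a², and μ_t(s,a¹,a²) = p^{π}_t(s,a¹,a²)/p^{πᵇ}_t(s,a¹,a²) is the marginal density ratio with the convention μ₀ ≡ 1, then Σ_τ p_{πᵇ}(τ) · Σ_{t=1}^T γ^{t−1} ( μ_t(s_t,a_t¹,a_t²)·(R(s_t,a_t¹,a_t²) − Q_t(s_t,a_t¹,a_t²)) + μ_{t−1}(s_{t−1},a_{t−1}¹,a_{t−1}²)·V_t(s_t) ) = v₁(π₁,π₂), where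 for t = 1 the second summand is read as V₁(s₁). -/
open Finset

noncomputable section
open TZMG Finset
variable {S A₁ A₂ : Type*} [Fintype S] [Fintype A₁] [Fintype A₂]

lemma dprod_eq' {m : ℕ} (PT : S → A₁ → A₂ → S → ℝ) (τ : Fin (m + 1) → S × A₁ × A₂) :
    (∏ k : Fin (m + 1),
      if h : (k : ℕ) + 1 < m + 1 then
        PT (τ k).1 (τ k).2.1 (τ k).2.2 (τ ⟨(k : ℕ) + 1, h⟩).1
      else 1) =
    ∏ k : Fin m, PT (τ k.castSucc).1 (τ k.castSucc).2.1 (τ k.castSucc).2.2 (τ k.succ).1 := by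
  rw [Fin.prod_univ_castSucc]
  rw [dif_neg (by simp)]
  rw [mul_one]
  refine Finset.prod_congr rfl fun j _ => ?_
  rw [dif_pos (by simp)]
  exact congrArg
    (fun z : Fin (m + 1) => PT (τ j.castSucc).1 (τ j.castSucc).2.1 (τ j.castSucc).2.2 (τ z).1)
    (Fin.ext (by simp))

lemma trajProb_eq' {m : ℕ} (PI : S → ℝ) (PT : S → A₁ → A₂ → S → ℝ)
    (σ₁ : ℕ → S → A₁ → ℝ) (σ₂ : ℕ → S → A₂ → ℝ) (τ : Fin (m + 1) → S × A₁ × A₂) :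
    trajProb PI PT σ₁ σ₂ τ =
      PI (τ 0).1 *
        (∏ k : Fin (m + 1), σ₁ k (τ k).1 (τ k).2.1 * σ₂ k (τ k).1 (τ k).2.2) *
        ∏ k : Fin m, PT (τ k.castSucc).1 (τ k.castSucc).2.1 (τ k.castSucc).2.2 (τ k.succ).1 := by
  rw [trajProb, dprod_eq']

lemma trajProb_snoc' {m : ℕ} (PI : S → ℝ) (PT : S → A₁ → A₂ → S → ℝ)
    (σ₁ : ℕ → S → A₁ → ℝ) (σ₂ : ℕ → S → A₂ → ℝ)
    (τ : Fin (m + 1) → S × A₁ × A₂) (x : S × A₁ × A₂) :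
    trajProb (T := m + 2) PI PT σ₁ σ₂ (Fin.snoc τ x) =
      trajProb PI PT σ₁ σ₂ τ *
        (PT (τ (Fin.last m)).1 (τ (Fin.last m)).2.1 (τ (Fin.last m)).2.2 x.1 *
          (σ₁ (m + 1) x.1 x.2.1 * σ₂ (m + 1) x.1 x.2.2)) := by
  have hσ : (∏ k : Fin (m + 2),
        σ₁ k (Fin.snoc (α := fun _ => S × A₁ × A₂) τ x k).1
            (Fin.snoc (α := fun _ => S × A₁ × A₂) τ x k).2.1 *
          σ₂ k (Fin.snoc (α := fun _ => S × A₁ × A₂) τ x k).1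
            (Fin.snoc (α := fun _ => S × A₁ × A₂) τ x k).2.2) =
      (∏ k : Fin (m + 1), σ₁ k (τ k).1 (τ k).2.1 * σ₂ k (τ k).1 (τ k).2.2) *
        (σ₁ (m + 1) x.1 x.2.1 * σ₂ (m + 1) x.1 x.2.2) := by
    rw [Fin.prod_univ_castSucc]
    simp only [Fin.snoc_castSucc, Fin.snoc_last, Fin.coe_castSucc, Fin.val_last]
  have hPT : (∏ k : Fin (m + 1),
        PT (Fin.snoc (α := fun _ => S × A₁ × A₂) τ x k.castSucc).1
          (Fin.snoc (α := fun _ => S × A₁ × A₂) τ x k.castSucc).2.1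
          (Fin.snoc (α := fun _ => S × A₁ × A₂) τ x k.castSucc).2.2
          (Fin.snoc (α := fun _ => S × A₁ × A₂) τ x k.succ).1) =
      (∏ k : Fin m, PT (τ k.castSucc).1 (τ k.castSucc).2.1 (τ k.castSucc).2.2 (τ k.succ).1) *
        PT (τ (Fin.last m)).1 (τ (Fin.last m)).2.1 (τ (Fin.last m)).2.2 x.1 := by
    rw [Fin.prod_univ_castSucc]
    simp only [Fin.succ_castSucc, Fin.snoc_castSucc, Fin.succ_last, Fin.snoc_last]
  rw [trajProb_eq', trajProb_eq', hσ, hPT,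
    show (0 : Fin (m + 2)) = Fin.castSucc 0 from rfl, Fin.snoc_castSucc]
  ring

lemma snoc_eq' {X : Type*} {m : ℕ} (τ : Fin (m + 1) → X) (x : X) (i : Fin (m + 2)) :
    (Fin.snoc (α := fun _ => X) τ x) i = if h : (i : ℕ) < m + 1 then τ ⟨i, h⟩ else x := by
  by_cases h : (i : ℕ) < m + 1
  · rw [dif_pos h]
    exact Fin.snoc_castSucc (α := fun _ => X) (p := τ) (x := x) (i := ⟨i, h⟩)
  · rw [dif_neg h]
    have hi : i = Fin.last (m + 1) := by ext; simp only [Fin.val_last]; omega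
    rw [hi, Fin.snoc_last]

lemma sum_snoc' {X : Type*} [Fintype X] {m : ℕ} (f : (Fin (m + 2) → X) → ℝ) :
    ∑ τ : Fin (m + 2) → X, f τ = ∑ τ : Fin (m + 1) → X, ∑ x : X, f (Fin.snoc τ x) := by
  rw [← Equiv.sum_comp (Fin.snocEquiv (fun _ => X)) f, Fintype.sum_prod_type,
    Finset.sum_comm]
  rfl

lemma sum_step' (PT : S → A₁ → A₂ → S → ℝ) (σ₁ : ℕ → S → A₁ → ℝ) (σ₂ : ℕ → S → A₂ → ℝ)
    (hPT1 : ∀ s a b, ∑ s' : S, PT s a b s' = 1)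
    (hσ₁ : ∀ t s, ∑ a : A₁, σ₁ t s a = 1) (hσ₂ : ∀ t s, ∑ b : A₂, σ₂ t s b = 1)
    (t : ℕ) (s : S) (a : A₁) (b : A₂) :
    ∑ x : S × A₁ × A₂, PT s a b x.1 * (σ₁ t x.1 x.2.1 * σ₂ t x.1 x.2.2) = 1 := by
  rw [Fintype.sum_prod_type]
  rw [show (1 : ℝ) = ∑ s' : S, PT s a b s' from (hPT1 s a b).symm]
  refine Finset.sum_congr rfl fun s' _ => ?_
  rw [Fintype.sum_prod_type]
  calc ∑ a' : A₁, ∑ b' : A₂, PT s a b s' * (σ₁ t s' a' * σ₂ t s' b')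
      = PT s a b s' * ((∑ a' : A₁, σ₁ t s' a') * (∑ b' : A₂, σ₂ t s' b')) := by
        rw [Finset.sum_mul_sum, Finset.mul_sum]
        exact Finset.sum_congr rfl fun a' _ => by rw [Finset.mul_sum]
    _ = PT s a b s' := by rw [hσ₁, hσ₂]; ring

lemma trajProb_one' (PI : S → ℝ) (PT : S → A₁ → A₂ → S → ℝ)
    (σ₁ : ℕ → S → A₁ → ℝ) (σ₂ : ℕ → S → A₂ → ℝ) (τ : Fin 1 → S × A₁ × A₂) :
    trajProb PI PT σ₁ σ₂ τ =
      PI (τ 0).1 * (σ₁ 0 (τ 0).1 (τ 0).2.1 * σ₂ 0 (τ 0).1 (τ 0).2.2) := by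
  rw [trajProb_eq' (m := 0)]
  simp

lemma L1' (PI : S → ℝ) (PT : S → A₁ → A₂ → S → ℝ)
    (σ₁ : ℕ → S → A₁ → ℝ) (σ₂ : ℕ → S → A₂ → ℝ)
    (hPT1 : ∀ s a b, ∑ s' : S, PT s a b s' = 1)
    (hσ₁ : ∀ t s, ∑ a : A₁, σ₁ t s a = 1) (hσ₂ : ∀ t s, ∑ b : A₂, σ₂ t s b = 1) :
    ∀ (m : ℕ) (k : Fin (m + 1)) (f : S → A₁ → A₂ → ℝ),
      ∑ τ : Fin (m + 1) → S × A₁ × A₂,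
          trajProb PI PT σ₁ σ₂ τ * f (τ k).1 (τ k).2.1 (τ k).2.2 =
        ∑ s : S, ∑ a : A₁, ∑ b : A₂, marg PI PT σ₁ σ₂ k s a b * f s a b := by
  intro m
  induction m with
  | zero =>
    intro k f
    have hk0 : k = 0 := Fin.fin_one_eq_zero k
    subst hk0
    have he : ∀ τ : Fin 1 → S × A₁ × A₂,
        trajProb PI PT σ₁ σ₂ τ * f (τ 0).1 (τ 0).2.1 (τ 0).2.2 =
          (fun x : S × A₁ × A₂ =>
            PI x.1 * (σ₁ 0 x.1 x.2.1 * σ₂ 0 x.1 x.2.2) * f x.1 x.2.1 x.2.2)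
            ((Equiv.funUnique (Fin 1) (S × A₁ × A₂)) τ) := by
      intro τ
      simp only [Equiv.funUnique_apply]
      rw [trajProb_one']
      rfl
    rw [Fintype.sum_equiv (Equiv.funUnique (Fin 1) (S × A₁ × A₂)) _
      (fun x : S × A₁ × A₂ =>
        PI x.1 * (σ₁ 0 x.1 x.2.1 * σ₂ 0 x.1 x.2.2) * f x.1 x.2.1 x.2.2) he]
    simp only [Fintype.sum_prod_type]
    refine Finset.sum_congr rfl fun s _ => Finset.sum_congr rfl fun a _ =>
      Finset.sum_congr rfl fun b _ => ?_
    show PI s * (σ₁ 0 s a * σ₂ 0 s b) * f s a b = marg PI PT σ₁ σ₂ 0 s a b * f s a b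
    rw [marg]
    ring
  | succ m ih =>
    intro k f
    rw [sum_snoc']
    by_cases hk : (k : ℕ) < m + 1
    · have hs : ∀ (τ : Fin (m + 1) → S × A₁ × A₂) (x : S × A₁ × A₂),
          (Fin.snoc (α := fun _ => S × A₁ × A₂) τ x) k = τ ⟨k, hk⟩ := fun τ x => by
        rw [snoc_eq', dif_pos hk]
      trans (∑ τ : Fin (m + 1) → S × A₁ × A₂,
        trajProb PI PT σ₁ σ₂ τ * f (τ ⟨k, hk⟩).1 (τ ⟨k, hk⟩).2.1 (τ ⟨k, hk⟩).2.2)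
      · refine Finset.sum_congr rfl fun τ _ => ?_
        calc ∑ x : S × A₁ × A₂, trajProb PI PT σ₁ σ₂ (Fin.snoc τ x) *
              f ((Fin.snoc (α := fun _ => S × A₁ × A₂) τ x) k).1
                ((Fin.snoc (α := fun _ => S × A₁ × A₂) τ x) k).2.1
                ((Fin.snoc (α := fun _ => S × A₁ × A₂) τ x) k).2.2
            = ∑ x : S × A₁ × A₂,
              (trajProb PI PT σ₁ σ₂ τ * f (τ ⟨k, hk⟩).1 (τ ⟨k, hk⟩).2.1 (τ ⟨k, hk⟩).2.2) *
                (PT (τ (Fin.last m)).1 (τ (Fin.last m)).2.1 (τ (Fin.last m)).2.2 x.1 *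
                  (σ₁ (m + 1) x.1 x.2.1 * σ₂ (m + 1) x.1 x.2.2)) := by
              refine Finset.sum_congr rfl fun x _ => ?_
              rw [trajProb_snoc', hs τ x]
              ring
          _ = trajProb PI PT σ₁ σ₂ τ * f (τ ⟨k, hk⟩).1 (τ ⟨k, hk⟩).2.1 (τ ⟨k, hk⟩).2.2 := by
              rw [← Finset.mul_sum, sum_step' PT σ₁ σ₂ hPT1 hσ₁ hσ₂, mul_one]
      · exact ih ⟨k, hk⟩ f
    · have hs : ∀ (τ : Fin (m + 1) → S × A₁ × A₂) (x : S × A₁ × A₂),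
          (Fin.snoc (α := fun _ => S × A₁ × A₂) τ x) k = x := fun τ x => by
        rw [snoc_eq', dif_neg hk]
      have hk' : (k : ℕ) = m + 1 := by omega
      rw [Finset.sum_comm]
      trans (∑ x : S × A₁ × A₂,
        (σ₁ (m + 1) x.1 x.2.1 * σ₂ (m + 1) x.1 x.2.2) * f x.1 x.2.1 x.2.2 *
          ∑ s : S, ∑ a : A₁, ∑ b : A₂, marg PI PT σ₁ σ₂ m s a b * PT s a b x.1)
      · refine Finset.sum_congr rfl fun x _ => ?_
        calc ∑ τ : Fin (m + 1) → S × A₁ × A₂, trajProb PI PT σ₁ σ₂ (Fin.snoc τ x) *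
              f ((Fin.snoc (α := fun _ => S × A₁ × A₂) τ x) k).1
                ((Fin.snoc (α := fun _ => S × A₁ × A₂) τ x) k).2.1
                ((Fin.snoc (α := fun _ => S × A₁ × A₂) τ x) k).2.2
            = ∑ τ : Fin (m + 1) → S × A₁ × A₂,
              (trajProb PI PT σ₁ σ₂ τ *
                PT (τ (Fin.last m)).1 (τ (Fin.last m)).2.1 (τ (Fin.last m)).2.2 x.1) *
                ((σ₁ (m + 1) x.1 x.2.1 * σ₂ (m + 1) x.1 x.2.2) * f x.1 x.2.1 x.2.2) := by
              refine Finset.sum_congr rfl fun τ _ => ?_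
              rw [trajProb_snoc', hs τ x]
              ring
          _ = (∑ s : S, ∑ a : A₁, ∑ b : A₂, marg PI PT σ₁ σ₂ m s a b * PT s a b x.1) *
                ((σ₁ (m + 1) x.1 x.2.1 * σ₂ (m + 1) x.1 x.2.2) * f x.1 x.2.1 x.2.2) := by
              rw [← Finset.sum_mul, ih (Fin.last m) (fun s a b => PT s a b x.1)]
              simp only [Fin.val_last]
          _ = _ := by ring
      · rw [hk']
        simp only [Fintype.sum_prod_type, marg]
        refine Finset.sum_congr rfl fun s' _ => Finset.sum_congr rfl fun a' _ =>
          Finset.sum_congr rfl fun b' _ => ?_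
        have hcomm : (∑ s : S, ∑ a : A₁, ∑ b : A₂, PT s a b s' * marg PI PT σ₁ σ₂ m s a b)
            = ∑ s : S, ∑ a : A₁, ∑ b : A₂, marg PI PT σ₁ σ₂ m s a b * PT s a b s' :=
          Finset.sum_congr rfl fun s _ => Finset.sum_congr rfl fun a _ =>
            Finset.sum_congr rfl fun b _ => mul_comm _ _
        rw [hcomm]
        ring

lemma sum_sigma_one' (σ₁ : ℕ → S → A₁ → ℝ) (σ₂ : ℕ → S → A₂ → ℝ)
    (hσ₁ : ∀ t s, ∑ a : A₁, σ₁ t s a = 1) (hσ₂ : ∀ t s, ∑ b : A₂, σ₂ t s b = 1)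
    (t : ℕ) (s' : S) (W : ℝ) :
    ∑ a' : A₁, ∑ b' : A₂, (σ₁ t s' a' * σ₂ t s' b') * W = W := by
  have h : ∀ a' : A₁, (∑ b' : A₂, (σ₁ t s' a' * σ₂ t s' b') * W) = σ₁ t s' a' * W := by
    intro a'
    calc ∑ b' : A₂, (σ₁ t s' a' * σ₂ t s' b') * W
        = (σ₁ t s' a' * W) * ∑ b' : A₂, σ₂ t s' b' := by
          rw [Finset.mul_sum]
          exact Finset.sum_congr rfl fun b' _ => by ring
      _ = σ₁ t s' a' * W := by rw [hσ₂, mul_one]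
  rw [Finset.sum_congr rfl fun a' _ => h a']
  rw [← Finset.sum_mul, hσ₁, one_mul]

lemma sum4_comm' (W : S → A₁ → A₂ → S → ℝ) :
    ∑ s' : S, ∑ s : S, ∑ a : A₁, ∑ b : A₂, W s a b s' =
      ∑ s : S, ∑ a : A₁, ∑ b : A₂, ∑ s' : S, W s a b s' := by
  rw [Finset.sum_comm]
  refine Finset.sum_congr rfl fun s _ => ?_
  rw [Finset.sum_comm]
  refine Finset.sum_congr rfl fun a _ => ?_
  rw [Finset.sum_comm]

lemma L2' (PI : S → ℝ) (PT : S → A₁ → A₂ → S → ℝ)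
    (σ₁ : ℕ → S → A₁ → ℝ) (σ₂ : ℕ → S → A₂ → ℝ)
    (hPT1 : ∀ s a b, ∑ s' : S, PT s a b s' = 1)
    (hσ₁ : ∀ t s, ∑ a : A₁, σ₁ t s a = 1) (hσ₂ : ∀ t s, ∑ b : A₂, σ₂ t s b = 1) :
    ∀ (m : ℕ) (k : Fin (m + 1)) (h1 : (k : ℕ) - 1 < m + 1) (hpos : 0 < (k : ℕ))
      (g : S → A₁ → A₂ → S → ℝ),
      ∑ τ : Fin (m + 1) → S × A₁ × A₂,
          trajProb PI PT σ₁ σ₂ τ *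
            g (τ ⟨(k : ℕ) - 1, h1⟩).1 (τ ⟨(k : ℕ) - 1, h1⟩).2.1
              (τ ⟨(k : ℕ) - 1, h1⟩).2.2 (τ k).1 =
        ∑ s : S, ∑ a : A₁, ∑ b : A₂, ∑ s' : S,
          marg PI PT σ₁ σ₂ ((k : ℕ) - 1) s a b * PT s a b s' * g s a b s' := by
  intro m
  induction m with
  | zero =>
    intro k h1 hpos g
    exact absurd k.isLt (by omega)
  | succ m ih =>
    intro k h1 hpos g
    rw [sum_snoc']
    by_cases hk : (k : ℕ) < m + 1
    · have h1' : (k : ℕ) - 1 < m + 1 := by omega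
      have hsk : ∀ (τ : Fin (m + 1) → S × A₁ × A₂) (x : S × A₁ × A₂),
          (Fin.snoc (α := fun _ => S × A₁ × A₂) τ x) k = τ ⟨k, hk⟩ := fun τ x => by
        rw [snoc_eq', dif_pos hk]
      have hsk1 : ∀ (τ : Fin (m + 1) → S × A₁ × A₂) (x : S × A₁ × A₂),
          (Fin.snoc (α := fun _ => S × A₁ × A₂) τ x) ⟨(k : ℕ) - 1, h1⟩ = τ ⟨(k : ℕ) - 1, h1'⟩ :=
        fun τ x => by
          rw [snoc_eq', dif_pos (show ((⟨(k : ℕ) - 1, h1⟩ : Fin (m + 2)) : ℕ) < m + 1 from h1')]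
      trans (∑ τ : Fin (m + 1) → S × A₁ × A₂,
        trajProb PI PT σ₁ σ₂ τ *
          g (τ ⟨(k : ℕ) - 1, h1'⟩).1 (τ ⟨(k : ℕ) - 1, h1'⟩).2.1
            (τ ⟨(k : ℕ) - 1, h1'⟩).2.2 (τ ⟨k, hk⟩).1)
      · refine Finset.sum_congr rfl fun τ _ => ?_
        calc ∑ x : S × A₁ × A₂, trajProb PI PT σ₁ σ₂ (Fin.snoc τ x) *
              g ((Fin.snoc (α := fun _ => S × A₁ × A₂) τ x) ⟨(k : ℕ) - 1, h1⟩).1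
                ((Fin.snoc (α := fun _ => S × A₁ × A₂) τ x) ⟨(k : ℕ) - 1, h1⟩).2.1
                ((Fin.snoc (α := fun _ => S × A₁ × A₂) τ x) ⟨(k : ℕ) - 1, h1⟩).2.2
                ((Fin.snoc (α := fun _ => S × A₁ × A₂) τ x) k).1
            = ∑ x : S × A₁ × A₂,
              (trajProb PI PT σ₁ σ₂ τ *
                g (τ ⟨(k : ℕ) - 1, h1'⟩).1 (τ ⟨(k : ℕ) - 1, h1'⟩).2.1
                  (τ ⟨(k : ℕ) - 1, h1'⟩).2.2 (τ ⟨k, hk⟩).1) *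
                (PT (τ (Fin.last m)).1 (τ (Fin.last m)).2.1 (τ (Fin.last m)).2.2 x.1 *
                  (σ₁ (m + 1) x.1 x.2.1 * σ₂ (m + 1) x.1 x.2.2)) := by
              refine Finset.sum_congr rfl fun x _ => ?_
              rw [trajProb_snoc', hsk τ x, hsk1 τ x]
              ring
          _ = _ := by
              rw [← Finset.mul_sum, sum_step' PT σ₁ σ₂ hPT1 hσ₁ hσ₂, mul_one]
      · exact ih ⟨k, hk⟩ h1' hpos g
    · have hk' : (k : ℕ) = m + 1 := by omega
      have hsk : ∀ (τ : Fin (m + 1) → S × A₁ × A₂) (x : S × A₁ × A₂),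
          (Fin.snoc (α := fun _ => S × A₁ × A₂) τ x) k = x := fun τ x => by
        rw [snoc_eq', dif_neg hk]
      have hsk1 : ∀ (τ : Fin (m + 1) → S × A₁ × A₂) (x : S × A₁ × A₂),
          (Fin.snoc (α := fun _ => S × A₁ × A₂) τ x) ⟨(k : ℕ) - 1, h1⟩ = τ (Fin.last m) :=
        fun τ x => by
          rw [snoc_eq', dif_pos (show (k : ℕ) - 1 < m + 1 by omega)]
          exact congrArg τ (Fin.ext (by simp only [Fin.val_last]; omega))
      rw [Finset.sum_comm]
      trans (∑ x : S × A₁ × A₂,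
        (σ₁ (m + 1) x.1 x.2.1 * σ₂ (m + 1) x.1 x.2.2) *
          ∑ s : S, ∑ a : A₁, ∑ b : A₂,
            marg PI PT σ₁ σ₂ m s a b * (PT s a b x.1 * g s a b x.1))
      · refine Finset.sum_congr rfl fun x _ => ?_
        calc ∑ τ : Fin (m + 1) → S × A₁ × A₂, trajProb PI PT σ₁ σ₂ (Fin.snoc τ x) *
              g ((Fin.snoc (α := fun _ => S × A₁ × A₂) τ x) ⟨(k : ℕ) - 1, h1⟩).1
                ((Fin.snoc (α := fun _ => S × A₁ × A₂) τ x) ⟨(k : ℕ) - 1, h1⟩).2.1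
                ((Fin.snoc (α := fun _ => S × A₁ × A₂) τ x) ⟨(k : ℕ) - 1, h1⟩).2.2
                ((Fin.snoc (α := fun _ => S × A₁ × A₂) τ x) k).1
            = ∑ τ : Fin (m + 1) → S × A₁ × A₂,
              (trajProb PI PT σ₁ σ₂ τ *
                (PT (τ (Fin.last m)).1 (τ (Fin.last m)).2.1 (τ (Fin.last m)).2.2 x.1 *
                  g (τ (Fin.last m)).1 (τ (Fin.last m)).2.1 (τ (Fin.last m)).2.2 x.1)) *
                (σ₁ (m + 1) x.1 x.2.1 * σ₂ (m + 1) x.1 x.2.2) := by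
              refine Finset.sum_congr rfl fun τ _ => ?_
              rw [trajProb_snoc', hsk τ x, hsk1 τ x]
              ring
          _ = (∑ s : S, ∑ a : A₁, ∑ b : A₂,
                marg PI PT σ₁ σ₂ m s a b * (PT s a b x.1 * g s a b x.1)) *
                (σ₁ (m + 1) x.1 x.2.1 * σ₂ (m + 1) x.1 x.2.2) := by
              rw [← Finset.sum_mul]
              congr 1
              exact L1' PI PT σ₁ σ₂ hPT1 hσ₁ hσ₂ m (Fin.last m)
                (fun s a b => PT s a b x.1 * g s a b x.1)
          _ = _ := by ring
      · rw [show (k : ℕ) - 1 = m by omega]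
        simp only [Fintype.sum_prod_type]
        trans (∑ s' : S, ∑ s : S, ∑ a : A₁, ∑ b : A₂,
          marg PI PT σ₁ σ₂ m s a b * (PT s a b s' * g s a b s'))
        · exact Finset.sum_congr rfl fun s' _ =>
            sum_sigma_one' σ₁ σ₂ hσ₁ hσ₂ (m + 1) s' _
        · rw [sum4_comm']
          exact Finset.sum_congr rfl fun s _ => Finset.sum_congr rfl fun a _ =>
            Finset.sum_congr rfl fun b _ => Finset.sum_congr rfl fun s' _ =>
              (mul_assoc _ _ _).symm

lemma Vfun_pi' (PT : S → A₁ → A₂ → S → ℝ) (R : S → A₁ → A₂ → ℝ) (γ : ℝ)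
    (π₁ : ℕ → S → A₁ → ℝ) (π₂ : ℕ → S → A₂ → ℝ) {T k : ℕ} (hk : k < T) (s : S) :
    Vfun PT R γ π₁ π₂ T k s =
      ∑ a : A₁, ∑ b : A₂, π₁ k s a * π₂ k s b * Qfun PT R γ π₁ π₂ T k s a b := by
  have h1 : T - k = (T - k - 1) + 1 := by omega
  rw [Vfun, h1, Vaux]
  rw [show T - (T - k - 1 + 1) = k by omega]
  simp only [Qfun]

lemma sum_marg_Q_zero' (PI : S → ℝ) (PT : S → A₁ → A₂ → S → ℝ) (R : S → A₁ → A₂ → ℝ)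
    (γ : ℝ) (π₁ : ℕ → S → A₁ → ℝ) (π₂ : ℕ → S → A₂ → ℝ) {T : ℕ} (hT : 0 < T) :
    ∑ s : S, ∑ a : A₁, ∑ b : A₂,
        marg PI PT π₁ π₂ 0 s a b * Qfun PT R γ π₁ π₂ T 0 s a b =
      ∑ s : S, PI s * Vfun PT R γ π₁ π₂ T 0 s := by
  refine Finset.sum_congr rfl fun s _ => ?_
  rw [Vfun_pi' PT R γ π₁ π₂ hT s, Finset.mul_sum]
  refine Finset.sum_congr rfl fun a _ => ?_
  rw [Finset.mul_sum]
  refine Finset.sum_congr rfl fun b _ => ?_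
  rw [marg]
  ring

lemma sum_marg_Q_succ' (PI : S → ℝ) (PT : S → A₁ → A₂ → S → ℝ) (R : S → A₁ → A₂ → ℝ)
    (γ : ℝ) (π₁ : ℕ → S → A₁ → ℝ) (π₂ : ℕ → S → A₂ → ℝ) {T k : ℕ} (hk : k + 1 < T) :
    ∑ s' : S, ∑ a' : A₁, ∑ b' : A₂,
        marg PI PT π₁ π₂ (k + 1) s' a' b' * Qfun PT R γ π₁ π₂ T (k + 1) s' a' b' =
      ∑ s : S, ∑ a : A₁, ∑ b : A₂, ∑ s' : S,
        marg PI PT π₁ π₂ k s a b * PT s a b s' * Vfun PT R γ π₁ π₂ T (k + 1) s' := by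
  trans (∑ s' : S,
    (∑ s : S, ∑ a : A₁, ∑ b : A₂, PT s a b s' * marg PI PT π₁ π₂ k s a b) *
      Vfun PT R γ π₁ π₂ T (k + 1) s')
  · refine Finset.sum_congr rfl fun s' _ => ?_
    simp only [marg]
    rw [Vfun_pi' PT R γ π₁ π₂ hk s', Finset.mul_sum]
    refine Finset.sum_congr rfl fun a' _ => ?_
    rw [Finset.mul_sum]
    refine Finset.sum_congr rfl fun b' _ => ?_
    ring
  · trans (∑ s' : S, ∑ s : S, ∑ a : A₁, ∑ b : A₂,
      marg PI PT π₁ π₂ k s a b * PT s a b s' * Vfun PT R γ π₁ π₂ T (k + 1) s')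
    · refine Finset.sum_congr rfl fun s' _ => ?_
      rw [Finset.sum_mul]
      refine Finset.sum_congr rfl fun s _ => ?_
      rw [Finset.sum_mul]
      refine Finset.sum_congr rfl fun a _ => ?_
      rw [Finset.sum_mul]
      refine Finset.sum_congr rfl fun b _ => ?_
      ring
    · exact sum4_comm' _

lemma per_k_split' {I : Type*} [Fintype I] (p A B : I → ℝ) (c : ℝ) :
    ∑ τ : I, p τ * (c * (A τ + B τ)) =
      c * ((∑ τ : I, p τ * A τ) + ∑ τ : I, p τ * B τ) := by
  rw [mul_add, Finset.mul_sum, Finset.mul_sum, ← Finset.sum_add_distrib]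
  exact Finset.sum_congr rfl fun τ _ => by ring

end


open TZMG in
/-- Unbiasedness of the oracle double reinforcement learning estimator: if the
behavior-profile marginals are strictly positive and
`μ_t(s,a,b) = p^π_t(s,a,b)/p^{πᵇ}_t(s,a,b)` is the marginal density ratio with the
convention `μ₀ ≡ 1`, then
`Σ_τ p_{πᵇ}(τ) Σ_{t=1}^T γ^{t−1}(μ_t(s_t,a_t¹,a_t²)(R(s_t,a_t¹,a_t²) −
   Q_t(s_t,a_t¹,a_t²)) + μ_{t−1}(s_{t−1},a_{t−1}¹,a_{t−1}²) V_t(s_t)) = v₁(π₁,π₂)`,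
where for `t = 1` the second summand is read as `V₁(s₁)`
(0-indexed: `t−1 = k`, `Q_t = Qfun … k`, `V_t = Vfun … k`). -/
theorem double_reinforcement_learning_unbiased
    {S A₁ A₂ : Type*} [Fintype S] [Fintype A₁] [Fintype A₂] [Nonempty S]
    [Nonempty A₁] [Nonempty A₂]
    (T : ℕ) [NeZero T] (γ : ℝ)
    (PI : S → ℝ) (hPI0 : ∀ s, 0 ≤ PI s) (hPI1 : ∑ s : S, PI s = 1)
    (PT : S → A₁ → A₂ → S → ℝ) (hPT0 : ∀ s a b s', 0 ≤ PT s a b s')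
    (hPT1 : ∀ s a b, ∑ s' : S, PT s a b s' = 1)
    (R : S → A₁ → A₂ → ℝ)
    (π₁ : ℕ → S → A₁ → ℝ) (hπ₁0 : ∀ t s a, 0 ≤ π₁ t s a)
    (hπ₁1 : ∀ t s, ∑ a : A₁, π₁ t s a = 1)
    (π₂ : ℕ → S → A₂ → ℝ) (hπ₂0 : ∀ t s b, 0 ≤ π₂ t s b)
    (hπ₂1 : ∀ t s, ∑ b : A₂, π₂ t s b = 1)
    (πb₁ : ℕ → S → A₁ → ℝ) (hπb₁0 : ∀ t s a, 0 ≤ πb₁ t s a)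
    (hπb₁1 : ∀ t s, ∑ a : A₁, πb₁ t s a = 1)
    (πb₂ : ℕ → S → A₂ → ℝ) (hπb₂0 : ∀ t s b, 0 ≤ πb₂ t s b)
    (hπb₂1 : ∀ t s, ∑ b : A₂, πb₂ t s b = 1)
    (hmargpos : ∀ (k : Fin T) (s : S) (a : A₁) (b : A₂),
      0 < marg PI PT πb₁ πb₂ k s a b)
    (μ : ℕ → S → A₁ → A₂ → ℝ)
    (hμ : ∀ (k : ℕ) (s : S) (a : A₁) (b : A₂),
      μ k s a b = marg PI PT π₁ π₂ k s a b / marg PI PT πb₁ πb₂ k s a b) :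
    (∑ τ : Fin T → S × A₁ × A₂, trajProb PI PT πb₁ πb₂ τ *
        ∑ k : Fin T, γ ^ (k : ℕ) *
          (μ k (τ k).1 (τ k).2.1 (τ k).2.2 *
              (R (τ k).1 (τ k).2.1 (τ k).2.2 -
                Qfun PT R γ π₁ π₂ T k (τ k).1 (τ k).2.1 (τ k).2.2) +
            (if h : 0 < (k : ℕ) then
                μ ((k : ℕ) - 1)
                  (τ ⟨(k : ℕ) - 1, lt_of_le_of_lt (Nat.sub_le _ _) k.isLt⟩).1
                  (τ ⟨(k : ℕ) - 1, lt_of_le_of_lt (Nat.sub_le _ _) k.isLt⟩).2.1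
                  (τ ⟨(k : ℕ) - 1, lt_of_le_of_lt (Nat.sub_le _ _) k.isLt⟩).2.2
              else 1) * Vfun PT R γ π₁ π₂ T k (τ k).1)) =
      value T PI PT R γ π₁ π₂ := by
  have hTpos : 0 < T := Nat.pos_of_ne_zero (NeZero.ne T)
  obtain ⟨m, rfl⟩ : ∃ m, T = m + 1 := ⟨T - 1, by omega⟩
  simp only [Finset.mul_sum]
  rw [Finset.sum_comm]
  trans (∑ k : Fin (m + 1), γ ^ (k : ℕ) *
    ∑ s : S, ∑ a : A₁, ∑ b : A₂, marg PI PT π₁ π₂ (k : ℕ) s a b * R s a b)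
  · refine Finset.sum_congr rfl fun k _ => ?_
    rw [per_k_split']
    have hAeq : (∑ τ : Fin (m + 1) → S × A₁ × A₂,
        trajProb PI PT πb₁ πb₂ τ *
          (μ (k : ℕ) (τ k).1 (τ k).2.1 (τ k).2.2 *
            (R (τ k).1 (τ k).2.1 (τ k).2.2 -
              Qfun PT R γ π₁ π₂ (m + 1) (k : ℕ) (τ k).1 (τ k).2.1 (τ k).2.2))) =
        ∑ s : S, ∑ a : A₁, ∑ b : A₂,
          marg PI PT π₁ π₂ (k : ℕ) s a b *
            (R s a b - Qfun PT R γ π₁ π₂ (m + 1) (k : ℕ) s a b) := by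
      trans (∑ s : S, ∑ a : A₁, ∑ b : A₂,
        marg PI PT πb₁ πb₂ (k : ℕ) s a b *
          (μ (k : ℕ) s a b * (R s a b - Qfun PT R γ π₁ π₂ (m + 1) (k : ℕ) s a b)))
      · exact L1' PI PT πb₁ πb₂ hPT1 hπb₁1 hπb₂1 m k
          (fun s a b => μ (k : ℕ) s a b *
            (R s a b - Qfun PT R γ π₁ π₂ (m + 1) (k : ℕ) s a b))
      · refine Finset.sum_congr rfl fun s _ => Finset.sum_congr rfl fun a _ =>
          Finset.sum_congr rfl fun b _ => ?_
        rw [hμ]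
        have hb : marg PI PT πb₁ πb₂ (k : ℕ) s a b ≠ 0 := (hmargpos k s a b).ne'
        field_simp
    have hBeq : (∑ τ : Fin (m + 1) → S × A₁ × A₂,
        trajProb PI PT πb₁ πb₂ τ *
          ((if h : 0 < (k : ℕ) then
              μ ((k : ℕ) - 1)
                (τ ⟨(k : ℕ) - 1, lt_of_le_of_lt (Nat.sub_le _ _) k.isLt⟩).1
                (τ ⟨(k : ℕ) - 1, lt_of_le_of_lt (Nat.sub_le _ _) k.isLt⟩).2.1
                (τ ⟨(k : ℕ) - 1, lt_of_le_of_lt (Nat.sub_le _ _) k.isLt⟩).2.2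
            else 1) * Vfun PT R γ π₁ π₂ (m + 1) (k : ℕ) (τ k).1)) =
        ∑ s : S, ∑ a : A₁, ∑ b : A₂,
          marg PI PT π₁ π₂ (k : ℕ) s a b * Qfun PT R γ π₁ π₂ (m + 1) (k : ℕ) s a b := by
      by_cases h0 : 0 < (k : ℕ)
      · simp only [dif_pos h0]
        trans (∑ s : S, ∑ a : A₁, ∑ b : A₂, ∑ s' : S,
          marg PI PT πb₁ πb₂ ((k : ℕ) - 1) s a b * PT s a b s' *
            (μ ((k : ℕ) - 1) s a b * Vfun PT R γ π₁ π₂ (m + 1) (k : ℕ) s'))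
        · exact L2' PI PT πb₁ πb₂ hPT1 hπb₁1 hπb₂1 m k
            (lt_of_le_of_lt (Nat.sub_le _ _) k.isLt) h0
            (fun s a b s' => μ ((k : ℕ) - 1) s a b *
              Vfun PT R γ π₁ π₂ (m + 1) (k : ℕ) s')
        · trans (∑ s : S, ∑ a : A₁, ∑ b : A₂, ∑ s' : S,
            marg PI PT π₁ π₂ ((k : ℕ) - 1) s a b * PT s a b s' *
              Vfun PT R γ π₁ π₂ (m + 1) (k : ℕ) s')
          · refine Finset.sum_congr rfl fun s _ => Finset.sum_congr rfl fun a _ =>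
              Finset.sum_congr rfl fun b _ => Finset.sum_congr rfl fun s' _ => ?_
            rw [hμ]
            have hb : marg PI PT πb₁ πb₂ ((k : ℕ) - 1) s a b ≠ 0 :=
              (hmargpos ⟨(k : ℕ) - 1, lt_of_le_of_lt (Nat.sub_le _ _) k.isLt⟩ s a b).ne'
            field_simp
          · have hk1 : ((k : ℕ) - 1) + 1 = (k : ℕ) := by omega
            have H := sum_marg_Q_succ' PI PT R γ π₁ π₂
              (T := m + 1) (k := (k : ℕ) - 1) (by omega)
            rw [hk1] at H
            exact H.symm
      · simp only [dif_neg h0, one_mul]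
        have hk0 : (k : ℕ) = 0 := by omega
        trans (∑ s : S, ∑ a : A₁, ∑ b : A₂,
          marg PI PT πb₁ πb₂ (k : ℕ) s a b * Vfun PT R γ π₁ π₂ (m + 1) (k : ℕ) s)
        · exact L1' PI PT πb₁ πb₂ hPT1 hπb₁1 hπb₂1 m k
            (fun s a b => Vfun PT R γ π₁ π₂ (m + 1) (k : ℕ) s)
        · rw [hk0]
          trans (∑ s : S, PI s * Vfun PT R γ π₁ π₂ (m + 1) 0 s)
          · refine Finset.sum_congr rfl fun s _ => ?_
            trans (∑ a : A₁, ∑ b : A₂,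
              (πb₁ 0 s a * πb₂ 0 s b) * (PI s * Vfun PT R γ π₁ π₂ (m + 1) 0 s))
            · refine Finset.sum_congr rfl fun a _ => Finset.sum_congr rfl fun b _ => ?_
              rw [marg]
              ring
            · exact sum_sigma_one' πb₁ πb₂ hπb₁1 hπb₂1 0 s _
          · exact (sum_marg_Q_zero' PI PT R γ π₁ π₂ (by omega)).symm
    rw [hAeq, hBeq]
    congr 1
    rw [← Finset.sum_add_distrib]
    refine Finset.sum_congr rfl fun s _ => ?_
    rw [← Finset.sum_add_distrib]
    refine Finset.sum_congr rfl fun a _ => ?_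
    rw [← Finset.sum_add_distrib]
    refine Finset.sum_congr rfl fun b _ => ?_
    ring
  · symm
    simp only [value]
    trans (∑ k : Fin (m + 1), ∑ τ : Fin (m + 1) → S × A₁ × A₂,
      trajProb PI PT π₁ π₂ τ * (γ ^ (k : ℕ) * R (τ k).1 (τ k).2.1 (τ k).2.2))
    · rw [← Finset.sum_comm]
      exact Finset.sum_congr rfl fun τ _ => Finset.mul_sum _ _ _
    · refine Finset.sum_congr rfl fun k _ => ?_
      trans (γ ^ (k : ℕ) * ∑ τ : Fin (m + 1) → S × A₁ × A₂,
        trajProb PI PT π₁ π₂ τ * R (τ k).1 (τ k).2.1 (τ k).2.2)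
      · rw [Finset.mul_sum]
        exact Finset.sum_congr rfl fun τ _ => by ring
      · exact congrArg (γ ^ (k : ℕ) * ·) (L1' PI PT π₁ π₂ hPT1 hπ₁1 hπ₂1 m k R)
end
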